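/- arXiv:2307.08873 — 5 statements merged into one kernel-verified Lean document; each statement's English description precedes it below -/
import Mathlib

section
/- Let b > 0 and let f : ℝ × ℝ → ℝ be a parameterized family of probability densities on [-b, b]: for every θ ∈ ℝ, f(θ, ·) is continuous on [-b, b], strictly positive on (-b, b), and ∫_{-b}^{b} f(θ, z) dz = 1. Let F(θ, z) = ∫_{-b}^{z} f(θ, t) dt and for each α ∈ (0,1) let q(θ, α) ∈ (-b, b) be the unique point with F(θ, q(θ, α)) = α. Fix θ₀ ∈ ℝ and assume: (i) for every z, θ ↦ f(θ, z) is differentiable with partial derivative ∂_θ f(θ, z) jointly measurable and uniformly bounded, and differentiation under the integral sign is valid, i.e. θ ↦ F(θ, z) is differentiable with ∂_θ F(θ, z) = ∫_{-b}^{z} ∂_θ f(θ, t) dt; (ii) for every α ∈ (0,1), θ ↦ q(θ, α) is differentiable, with |∂_θ q(θ, α)| uniformly bounded over θ and α. Then the function D(θ) = ∫₀¹ q(θ, α)(2α − 1) dα is differentiable at θ₀ and D'(θ₀) = −∫_{-b}^{b} ∂_θ f(θ₀, z) · (∫_{z}^{b} (2 F(θ₀, t) − 1) dt) dz. -/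
open MeasureTheory Set

set_option maxHeartbeats 1000000

private lemma gini_aux_stepB (q q' : ℝ → ℝ → ℝ) (θ₀ Cq : ℝ)
    (aesm_q : ∀ θ, AEStronglyMeasurable (fun α => q θ α * (2 * α - 1))
      (volume.restrict (Ioo (0:ℝ) 1)))
    (hint_q : Integrable (fun α => q θ₀ α * (2 * α - 1)) (volume.restrict (Ioo (0:ℝ) 1)))
    (m' : AEStronglyMeasurable (fun α => q' θ₀ α * (2 * α - 1)) (volume.restrict (Ioo (0:ℝ) 1)))
    (hbound : ∀ᵐ α ∂(volume.restrict (Ioo (0:ℝ) 1)),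
        ∀ θ ∈ Metric.ball θ₀ 1, ‖q' θ α * (2 * α - 1)‖ ≤ Cq)
    (hdiff : ∀ᵐ α ∂(volume.restrict (Ioo (0:ℝ) 1)),
        ∀ θ ∈ Metric.ball θ₀ 1,
          HasDerivAt (fun ϑ => q ϑ α * (2 * α - 1)) (q' θ α * (2 * α - 1)) θ) :
    HasDerivAt (fun θ => ∫ α in Ioo (0:ℝ) 1, q θ α * (2 * α - 1))
      (∫ α in Ioo (0:ℝ) 1, q' θ₀ α * (2 * α - 1)) θ₀ := by
  haveI hfinmeas : IsFiniteMeasure (volume.restrict (Ioo (0:ℝ) 1)) := by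
    constructor
    rw [Measure.restrict_apply_univ]
    exact measure_Ioo_lt_top
  have hc : Integrable (fun _ : ℝ => Cq) (volume.restrict (Ioo (0:ℝ) 1)) :=
    integrable_const Cq
  exact (hasDerivAt_integral_of_dominated_loc_of_deriv_le (𝕜 := ℝ)
      (μ := volume.restrict (Ioo (0:ℝ) 1)) (x₀ := θ₀) (bound := fun _ => Cq)
      (F := fun θ α => q θ α * (2 * α - 1)) (F' := fun θ α => q' θ α * (2 * α - 1))
      (Metric.ball_mem_nhds θ₀ one_pos) (Filter.Eventually.of_forall aesm_q) hint_q m'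
      hbound hc hdiff).2

/-- Proposition 1 (Gini deviation policy-gradient formula): under regularity
assumptions on a parameterized family of densities `f θ` on `[-b, b]`, the Gini
deviation `D θ = ∫₀¹ q θ α * (2α - 1) dα` (quantile representation) is
differentiable at `θ₀` with derivative
`-∫_{-b}^b ∂_θ f θ₀ z * (∫_z^b (2 F θ₀ t - 1) dt) dz`. -/
theorem gini_deviation_gradient_formula
    (b : ℝ) (hb : 0 < b)
    (f : ℝ → ℝ → ℝ)
    (hf_cont : ∀ θ, ContinuousOn (f θ) (Set.Icc (-b) b))
    (hf_pos : ∀ θ, ∀ z ∈ Set.Ioo (-b) b, 0 < f θ z)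
    (hf_int : ∀ θ, (∫ z in (-b)..b, f θ z) = 1)
    (F : ℝ → ℝ → ℝ)
    (hF : ∀ θ z, F θ z = ∫ t in (-b)..z, f θ t)
    (q : ℝ → ℝ → ℝ)
    (hq_mem : ∀ θ, ∀ α ∈ Set.Ioo (0:ℝ) 1, q θ α ∈ Set.Ioo (-b) b)
    (hq : ∀ θ, ∀ α ∈ Set.Ioo (0:ℝ) 1, F θ (q θ α) = α)
    (θ₀ : ℝ)
    -- (i) differentiability of the density in θ, with jointly measurable,
    -- uniformly bounded partial derivative, and differentiation under the
    -- integral sign for the CDF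
    (f' : ℝ → ℝ → ℝ)
    (hf' : ∀ θ z, HasDerivAt (fun ϑ => f ϑ z) (f' θ z) θ)
    (hf'_meas : Measurable (Function.uncurry f'))
    (Cf : ℝ) (hf'_bdd : ∀ θ z, |f' θ z| ≤ Cf)
    (hF' : ∀ θ z, HasDerivAt (fun ϑ => F ϑ z) (∫ t in (-b)..z, f' θ t) θ)
    -- (ii) differentiability of the quantile function in θ, with uniformly
    -- bounded derivative
    (q' : ℝ → ℝ → ℝ)
    (hq' : ∀ θ, ∀ α ∈ Set.Ioo (0:ℝ) 1, HasDerivAt (fun ϑ => q ϑ α) (q' θ α) θ)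
    (Cq : ℝ) (hq'_bdd : ∀ θ, ∀ α ∈ Set.Ioo (0:ℝ) 1, |q' θ α| ≤ Cq) :
    HasDerivAt (fun θ => ∫ α in (0:ℝ)..1, q θ α * (2 * α - 1))
      (-∫ z in (-b)..b, f' θ₀ z * (∫ t in z..b, (2 * F θ₀ t - 1))) θ₀ := by
  have hIcc : Ioo (-b) b ⊆ Icc (-b) b := Ioo_subset_Icc_self
  have hCf0 : 0 ≤ Cf := (abs_nonneg _).trans (hf'_bdd θ₀ 0)
  have hCq0 : 0 ≤ Cq := (abs_nonneg _).trans
    (hq'_bdd θ₀ (1/2) (by constructor <;> norm_num))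
  -- interval integrability of f θ on subintervals of Icc
  have int_f : ∀ θ, ∀ u ∈ Icc (-b) b, ∀ v ∈ Icc (-b) b,
      IntervalIntegrable (f θ) volume u v := fun θ u hu v hv =>
    ((hf_cont θ).mono (uIcc_subset_Icc hu hv)).intervalIntegrable
  -- measurability of f' θ₀ in z
  have meas_f' : Measurable (f' θ₀) := hf'_meas.comp measurable_prodMk_left
  have int_f' : ∀ u v : ℝ, IntervalIntegrable (f' θ₀) volume u v := by
    intro u v
    rw [intervalIntegrable_iff]
    refine Integrable.mono' (g := fun _ => Cf)
      (integrableOn_const measure_Ioc_lt_top.ne)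
      meas_f'.aestronglyMeasurable.restrict
      (Filter.Eventually.of_forall fun t => ?_)
    simpa using hf'_bdd θ₀ t
  -- additivity of F
  have hFadd : ∀ θ, ∀ u ∈ Icc (-b) b, F θ u = F θ (-b) + ∫ t in (-b)..u, f θ t := by
    intro θ u hu
    rw [hF θ u, hF θ (-b), intervalIntegral.integral_same, zero_add]
  have hF0 : ∀ θ, F θ (-b) = 0 := fun θ => by
    rw [hF θ (-b), intervalIntegral.integral_same]
  have hF1 : ∀ θ, F θ b = 1 := fun θ => by rw [hF θ b]; exact hf_int θ
  have hFdiff : ∀ θ, ∀ u ∈ Icc (-b) b, ∀ v ∈ Icc (-b) b,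
      F θ v - F θ u = ∫ t in u..v, f θ t := by
    intro θ u hu v hv
    have h := intervalIntegral.integral_add_adjacent_intervals
      (int_f θ (-b) (left_mem_Icc.2 (by linarith [hb])) u hu)
      (int_f θ u hu v hv)
    rw [hF θ u, hF θ v]
    linarith
  -- strict monotonicity of F θ on Icc
  have hFmono : ∀ θ, StrictMonoOn (F θ) (Icc (-b) b) := by
    intro θ u hu v hv huv
    have h : F θ v - F θ u = ∫ t in u..v, f θ t := hFdiff θ u hu v hv
    have hpos : 0 < ∫ t in u..v, f θ t := by
      apply intervalIntegral.intervalIntegral_pos_of_pos_on (int_f θ u hu v hv)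
      · intro x hx
        exact hf_pos θ x ⟨lt_of_le_of_lt hu.1 hx.1, lt_of_lt_of_le hx.2 hv.2⟩
      · exact huv
    linarith
  -- F θ z ∈ Ioo 0 1 for z ∈ Ioo
  have hFmem : ∀ θ, ∀ z ∈ Ioo (-b) b, F θ z ∈ Ioo (0:ℝ) 1 := by
    intro θ z hz
    constructor
    · have := hFmono θ (left_mem_Icc.2 (by linarith)) (hIcc hz) hz.1
      rwa [hF0 θ] at this
    · have := hFmono θ (hIcc hz) (right_mem_Icc.2 (by linarith)) hz.2
      rwa [hF1 θ] at this
  -- q θ₀ inverts F θ₀ on Ioo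
  have hqF : ∀ z ∈ Ioo (-b) b, q θ₀ (F θ₀ z) = z := by
    intro z hz
    have hmem := hFmem θ₀ z hz
    have h1 : F θ₀ (q θ₀ (F θ₀ z)) = F θ₀ z := hq θ₀ _ hmem
    exact (hFmono θ₀).injOn (hIcc (hq_mem θ₀ _ hmem)) (hIcc hz) h1
  -- FTC: derivative of F θ₀ in z on Ioo
  have hFTC : ∀ z ∈ Ioo (-b) b, HasDerivAt (F θ₀) (f θ₀ z) z := by
    intro z hz
    have hfun : F θ₀ = fun u => ∫ t in (-b)..u, f θ₀ t := funext fun u => hF θ₀ u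
    rw [hfun]
    have hnhds : Icc (-b) b ∈ nhds z := Icc_mem_nhds hz.1 hz.2
    have hca : ContinuousAt (f θ₀) z := (hf_cont θ₀).continuousAt hnhds
    exact intervalIntegral.integral_hasDerivAt_right
      (int_f θ₀ (-b) (left_mem_Icc.2 (by linarith)) z (hIcc hz))
      (ContinuousAt.stronglyMeasurableAtFilter isOpen_Ioo
        (fun x hx => (hf_cont θ₀).continuousAt (Icc_mem_nhds hx.1 hx.2)) z hz) hca
  -- Lipschitz estimates in θ
  have lip_f : ∀ θ t, |f θ t - f θ₀ t| ≤ Cf * |θ - θ₀| := by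
    intro θ t
    have := Convex.norm_image_sub_le_of_norm_hasDerivWithin_le
      (f := fun ϑ => f ϑ t) (f' := fun ϑ => f' ϑ t) (s := univ)
      (fun x _ => (hf' x t).hasDerivWithinAt)
      (fun x _ => by simpa using hf'_bdd x t) convex_univ (mem_univ θ₀) (mem_univ θ)
    simpa [Real.norm_eq_abs] using this
  have lip_q : ∀ α ∈ Ioo (0:ℝ) 1, ∀ θ, |q θ α - q θ₀ α| ≤ Cq * |θ - θ₀| := by
    intro α hα θ
    have := Convex.norm_image_sub_le_of_norm_hasDerivWithin_le
      (f := fun ϑ => q ϑ α) (f' := fun ϑ => q' ϑ α) (s := univ)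
      (fun x _ => (hq' x α hα).hasDerivWithinAt)
      (fun x _ => by simpa using hq'_bdd x α hα) convex_univ (mem_univ θ₀) (mem_univ θ)
    simpa [Real.norm_eq_abs] using this
  -- Step A: implicit differentiation identity
  have keyA : ∀ α ∈ Ioo (0:ℝ) 1,
      f θ₀ (q θ₀ α) * q' θ₀ α = -(∫ t in (-b)..(q θ₀ α), f' θ₀ t) := by
    intro α hα
    have hz₀ : q θ₀ α ∈ Ioo (-b) b := hq_mem θ₀ α hα
    have hd1 : HasDerivAt (fun θ => F θ₀ (q θ α)) (f θ₀ (q θ₀ α) * q' θ₀ α) θ₀ := by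
      have := (hFTC (q θ₀ α) hz₀).comp θ₀ (hq' θ₀ α hα)
      simpa [Function.comp_def] using this
    have hBE : ∀ θ, F θ₀ (q θ α) =
        α - ((F θ (q θ₀ α) - F θ₀ (q θ₀ α)) + ∫ t in (q θ₀ α)..(q θ α), (f θ t - f θ₀ t)) := by
      intro θ
      have hqm := hq_mem θ α hα
      have h1 : F θ (q θ α) - F θ (q θ₀ α) = ∫ t in (q θ₀ α)..(q θ α), f θ t :=
        hFdiff θ _ (hIcc hz₀) _ (hIcc hqm)
      have h2 : F θ₀ (q θ α) - F θ₀ (q θ₀ α) = ∫ t in (q θ₀ α)..(q θ α), f θ₀ t :=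
        hFdiff θ₀ _ (hIcc hz₀) _ (hIcc hqm)
      have h3 : ∫ t in (q θ₀ α)..(q θ α), (f θ t - f θ₀ t)
          = (∫ t in (q θ₀ α)..(q θ α), f θ t) - ∫ t in (q θ₀ α)..(q θ α), f θ₀ t :=
        intervalIntegral.integral_sub (int_f θ _ (hIcc hz₀) _ (hIcc hqm))
          (int_f θ₀ _ (hIcc hz₀) _ (hIcc hqm))
      have h4 : F θ (q θ α) = α := hq θ α hα
      linarith
    have hB : HasDerivAt (fun θ => F θ (q θ₀ α) - F θ₀ (q θ₀ α))
        (∫ t in (-b)..(q θ₀ α), f' θ₀ t) θ₀ := (hF' θ₀ (q θ₀ α)).sub_const _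
    have hE : HasDerivAt (fun θ => ∫ t in (q θ₀ α)..(q θ α), (f θ t - f θ₀ t)) 0 θ₀ := by
      rw [hasDerivAt_iff_isLittleO, Asymptotics.isLittleO_iff]
      intro c hc
      have hpos : (0:ℝ) < c / (Cf * Cq + 1) := div_pos hc (by positivity)
      filter_upwards [Metric.ball_mem_nhds θ₀ hpos] with θ hθ
      rw [Metric.mem_ball, Real.dist_eq] at hθ
      have hbound : ∀ t ∈ Set.uIoc (q θ₀ α) (q θ α), ‖f θ t - f θ₀ t‖ ≤ Cf * |θ - θ₀| := by
        intro t _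
        simpa [Real.norm_eq_abs] using lip_f θ t
      have h5 := intervalIntegral.norm_integral_le_of_norm_le_const hbound
      have h6 : |q θ α - q θ₀ α| ≤ Cq * |θ - θ₀| := lip_q α hα θ
      have h7 : ‖∫ t in (q θ₀ α)..(q θ α), (f θ t - f θ₀ t)‖
          ≤ (Cf * |θ - θ₀|) * (Cq * |θ - θ₀|) :=
        h5.trans (by
          apply mul_le_mul_of_nonneg_left h6 (by positivity))
      have habs : (0:ℝ) ≤ |θ - θ₀| := abs_nonneg _
      simp only [intervalIntegral.integral_same, sub_zero, smul_zero,
        Real.norm_eq_abs]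
      calc |∫ t in (q θ₀ α)..(q θ α), (f θ t - f θ₀ t)|
          ≤ (Cf * |θ - θ₀|) * (Cq * |θ - θ₀|) := h7
        _ ≤ c * |θ - θ₀| := by
            have h8 : |θ - θ₀| * (Cf * Cq + 1) < c := by
              rwa [lt_div_iff₀ (by positivity : (0:ℝ) < Cf * Cq + 1)] at hθ
            nlinarith [mul_le_mul_of_nonneg_right h8.le habs,
              mul_nonneg hCf0 hCq0, sq_nonneg (θ - θ₀)]
    have hd2 : HasDerivAt (fun θ => F θ₀ (q θ α))
        (-(∫ t in (-b)..(q θ₀ α), f' θ₀ t)) θ₀ := by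
      have h8 := (hB.add hE).const_sub α
      rw [add_zero] at h8
      have h9 : (fun θ => α - ((F θ (q θ₀ α) - F θ₀ (q θ₀ α))
          + ∫ t in (q θ₀ α)..(q θ α), (f θ t - f θ₀ t))) = fun θ => F θ₀ (q θ α) :=
        funext fun θ => (hBE θ).symm
      rw [← h9]; exact h8
    exact hd1.unique hd2
  -- monotonicity and measurability of q, q'
  have mono_q : ∀ θ, MonotoneOn (q θ) (Ioo (0:ℝ) 1) := by
    intro θ α hα β hβ hαβ
    by_contra hlt
    push_neg at hlt
    have := hFmono θ (hIcc (hq_mem θ β hβ)) (hIcc (hq_mem θ α hα)) hlt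
    rw [hq θ α hα, hq θ β hβ] at this
    exact absurd hαβ (not_le.2 this)
  have meas_q : ∀ θ, AEMeasurable (q θ) (volume.restrict (Ioo (0:ℝ) 1)) := fun θ =>
    aemeasurable_restrict_of_monotoneOn measurableSet_Ioo (mono_q θ)
  have meas_q' : AEMeasurable (q' θ₀) (volume.restrict (Ioo (0:ℝ) 1)) := by
    have hseq : ∀ n : ℕ, AEMeasurable
        (fun α => (q (θ₀ + 1/(n+1)) α - q θ₀ α) / ((θ₀ + 1/(n+1)) - θ₀))
        (volume.restrict (Ioo (0:ℝ) 1)) := fun n =>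
      ((meas_q _).sub (meas_q θ₀)).div_const _
    apply aemeasurable_of_tendsto_metrizable_ae' hseq
    rw [ae_restrict_iff' measurableSet_Ioo]
    refine Filter.Eventually.of_forall fun α hα => ?_
    have hs := hq' θ₀ α hα
    rw [hasDerivAt_iff_tendsto_slope] at hs
    have htend : Filter.Tendsto (fun n : ℕ => θ₀ + 1/(n+1:ℝ)) Filter.atTop
        (nhdsWithin θ₀ {θ₀}ᶜ) := by
      rw [tendsto_nhdsWithin_iff]
      constructor
      · have h0 : Filter.Tendsto (fun n : ℕ => 1/(n+1:ℝ)) Filter.atTop (nhds 0) :=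
          tendsto_one_div_add_atTop_nhds_zero_nat
        simpa using tendsto_const_nhds.add h0
      · refine Filter.Eventually.of_forall fun n => ?_
        have : (0:ℝ) < 1/(n+1:ℝ) := by positivity
        simp only [mem_compl_iff, mem_singleton_iff]
        intro hcon
        nlinarith [hcon]
    have hfin := hs.comp htend
    refine hfin.congr fun n => ?_
    simp [Function.comp, slope_def_field]
  -- interval integral over (0,1) as set integral over Ioo
  have hIoc : ∀ g : ℝ → ℝ, (∫ α in (0:ℝ)..1, g α) = ∫ α in Ioo (0:ℝ) 1, g α := by
    intro g
    rw [intervalIntegral.integral_of_le zero_le_one,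
      Measure.restrict_congr_set Ioo_ae_eq_Ioc]
  haveI hfinmeas : IsFiniteMeasure (volume.restrict (Ioo (0:ℝ) 1)) := by
    constructor
    rw [Measure.restrict_apply_univ]
    exact measure_Ioo_lt_top
  have meas_lin : Measurable fun α : ℝ => 2 * α - 1 :=
    (measurable_const.mul measurable_id).sub measurable_const
  have aesm_q : ∀ θ, AEStronglyMeasurable (fun α => q θ α * (2 * α - 1))
      (volume.restrict (Ioo (0:ℝ) 1)) := fun θ =>
    ((meas_q θ).mul meas_lin.aemeasurable).aestronglyMeasurable
  have hlin_bd : ∀ α ∈ Ioo (0:ℝ) 1, |2 * α - 1| ≤ 1 := by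
    intro α hα
    rw [abs_le]
    constructor <;> nlinarith [hα.1, hα.2]
  have hint_q : Integrable (fun α => q θ₀ α * (2 * α - 1))
      (volume.restrict (Ioo (0:ℝ) 1)) := by
    refine Integrable.mono' (g := fun _ => b) (integrable_const b) (aesm_q θ₀) ?_
    rw [ae_restrict_iff' measurableSet_Ioo]
    refine Filter.Eventually.of_forall fun α hα => ?_
    have h1 := hq_mem θ₀ α hα
    have h2 : |q θ₀ α| ≤ b := le_of_lt (abs_lt.2 ⟨h1.1, h1.2⟩)
    calc ‖q θ₀ α * (2 * α - 1)‖ = |q θ₀ α| * |2 * α - 1| := abs_mul _ _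
      _ ≤ b * 1 := mul_le_mul h2 (hlin_bd α hα) (abs_nonneg _) (by linarith [h1.1, h1.2, hb])
      _ = b := mul_one b
  have stepB : HasDerivAt (fun θ => ∫ α in Ioo (0:ℝ) 1, q θ α * (2 * α - 1))
      (∫ α in Ioo (0:ℝ) 1, q' θ₀ α * (2 * α - 1)) θ₀ := by
    have hbound : ∀ᵐ α ∂(volume.restrict (Ioo (0:ℝ) 1)),
        ∀ θ ∈ Metric.ball θ₀ 1, ‖q' θ α * (2 * α - 1)‖ ≤ Cq := by
      rw [ae_restrict_iff' measurableSet_Ioo]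
      refine Filter.Eventually.of_forall fun α hα θ _ => ?_
      calc ‖q' θ α * (2 * α - 1)‖ = |q' θ α| * |2 * α - 1| := abs_mul _ _
        _ ≤ Cq * 1 := mul_le_mul (hq'_bdd θ α hα) (hlin_bd α hα) (abs_nonneg _) hCq0
        _ = Cq := mul_one Cq
    have hdiff : ∀ᵐ α ∂(volume.restrict (Ioo (0:ℝ) 1)),
        ∀ θ ∈ Metric.ball θ₀ 1,
          HasDerivAt (fun ϑ => q ϑ α * (2 * α - 1)) (q' θ α * (2 * α - 1)) θ := by
      rw [ae_restrict_iff' measurableSet_Ioo]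
      exact Filter.Eventually.of_forall fun α hα θ _ => (hq' θ α hα).mul_const _
    have m' : AEStronglyMeasurable (fun α => q' θ₀ α * (2 * α - 1))
        (volume.restrict (Ioo (0:ℝ) 1)) :=
      (meas_q'.mul meas_lin.aemeasurable).aestronglyMeasurable
    exact gini_aux_stepB q q' θ₀ Cq aesm_q hint_q m' hbound hdiff
  -- interval integral over (-b,b) as set integral over Ioo
  have hIoc2 : ∀ g : ℝ → ℝ, (∫ z in (-b)..b, g z) = ∫ z in Ioo (-b) b, g z := by
    intro g
    rw [intervalIntegral.integral_of_le (by linarith : -b ≤ b),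
      Measure.restrict_congr_set Ioo_ae_eq_Ioc]
  -- Step C : change of variables α = F θ₀ z
  have himg : F θ₀ '' Ioo (-b) b = Ioo (0:ℝ) 1 := by
    apply Subset.antisymm
    · rintro α ⟨z, hz, rfl⟩
      exact hFmem θ₀ z hz
    · intro α hα
      exact ⟨q θ₀ α, hq_mem θ₀ α hα, hq θ₀ α hα⟩
  have hCOV := MeasureTheory.integral_image_eq_integral_abs_deriv_smul
    (measurableSet_Ioo : MeasurableSet (Ioo (-b) b))
    (fun z hz => (hFTC z hz).hasDerivWithinAt)
    (((hFmono θ₀).injOn).mono hIcc)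
    (fun α => q' θ₀ α * (2 * α - 1))
  rw [himg] at hCOV
  have hC : (∫ α in Ioo (0:ℝ) 1, q' θ₀ α * (2 * α - 1))
      = ∫ z in Ioo (-b) b, -((∫ t in (-b)..z, f' θ₀ t) * (2 * F θ₀ z - 1)) := by
    rw [hCOV]
    apply MeasureTheory.setIntegral_congr_fun measurableSet_Ioo
    intro z hz
    have hαz : F θ₀ z ∈ Ioo (0:ℝ) 1 := hFmem θ₀ z hz
    have hk := keyA (F θ₀ z) hαz
    rw [hqF z hz] at hk
    have hfz : 0 < f θ₀ z := hf_pos θ₀ z hz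
    simp only [smul_eq_mul, abs_of_pos hfz]
    calc f θ₀ z * (q' θ₀ (F θ₀ z) * (2 * F θ₀ z - 1))
        = (f θ₀ z * q' θ₀ (F θ₀ z)) * (2 * F θ₀ z - 1) := by ring
      _ = -((∫ t in (-b)..z, f' θ₀ t) * (2 * F θ₀ z - 1)) := by rw [hk]; ring
  -- Step D : Fubini
  obtain ⟨M, hM⟩ := isCompact_Icc.exists_bound_of_continuousOn (hf_cont θ₀)
  have hM0 : 0 ≤ M := (norm_nonneg _).trans (hM (-b) (left_mem_Icc.2 (by linarith)))
  have hFbd : ∀ u ∈ Icc (-b) b, |F θ₀ u| ≤ M * (2 * b) := by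
    intro u hu
    rw [hF θ₀ u]
    have h1 : ∀ t ∈ Set.uIoc (-b) u, ‖f θ₀ t‖ ≤ M := fun t ht =>
      hM t (uIcc_subset_Icc (left_mem_Icc.2 (by linarith)) hu (uIoc_subset_uIcc ht))
    have := intervalIntegral.norm_integral_le_of_norm_le_const h1
    rw [Real.norm_eq_abs] at this
    refine this.trans ?_
    have : |u - (-b)| ≤ 2 * b := by
      rw [abs_le]; constructor <;> [linarith [hu.1, hu.2]; linarith [hu.1, hu.2]]
    nlinarith
  set Fc : ℝ → ℝ := fun z => F θ₀ (max (-b) (min b z)) with hFcdef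
  have hproj : ∀ z : ℝ, max (-b) (min b z) ∈ Icc (-b) b := by
    intro z
    constructor
    · exact le_max_left _ _
    · exact max_le (by linarith) (min_le_left _ _)
  have hFc_eq : ∀ z ∈ Icc (-b) b, Fc z = F θ₀ z := by
    intro z hz
    have : max (-b) (min b z) = z := by
      rw [min_eq_right hz.2, max_eq_right hz.1]
    rw [hFcdef]; simp only [this]
  have hFc_mono : Monotone Fc := by
    intro u v huv
    exact ((hFmono θ₀).monotoneOn) (hproj u) (hproj v)
      (max_le_max le_rfl (min_le_min le_rfl huv))
  have meas_Fc : Measurable Fc := hFc_mono.measurable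
  have hFc_bd : ∀ z : ℝ, |Fc z| ≤ M * (2 * b) := fun z => hFbd _ (hproj z)
  haveI hfin1 : IsFiniteMeasure (volume.restrict (Ioo (-b) b)) := by
    constructor
    rw [Measure.restrict_apply_univ]
    exact measure_Ioo_lt_top
  set ψ : ℝ → ℝ → ℝ := fun t z => if t ≤ z then f' θ₀ t * (2 * Fc z - 1) else 0 with hψdef
  have meas_ψ : Measurable (Function.uncurry ψ) := by
    apply Measurable.ite
    · exact measurableSet_le measurable_fst measurable_snd
    · exact (meas_f'.comp measurable_fst).mul
        (((meas_Fc.comp measurable_snd).const_mul 2).sub measurable_const)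
    · exact measurable_const
  have int_ψ : Integrable (Function.uncurry ψ)
      ((volume.restrict (Ioo (-b) b)).prod (volume.restrict (Ioo (-b) b))) := by
    refine Integrable.mono' (g := fun _ => Cf * (2 * (M * (2 * b)) + 1))
      (integrable_const _) meas_ψ.aestronglyMeasurable
      (Filter.Eventually.of_forall fun p => ?_)
    rw [Function.uncurry]
    by_cases hp : p.1 ≤ p.2
    · simp only [hψdef, hp, if_true]
      rw [Real.norm_eq_abs, abs_mul]
      have h1 : |f' θ₀ p.1| ≤ Cf := hf'_bdd θ₀ p.1
      have h2 : |2 * Fc p.2 - 1| ≤ 2 * (M * (2 * b)) + 1 := by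
        have := hFc_bd p.2
        rw [abs_le] at this ⊢
        constructor <;> [linarith [this.1, this.2]; linarith [this.1, this.2]]
      exact mul_le_mul h1 h2 (abs_nonneg _) hCf0
    · simp only [hψdef, hp, if_false]
      rw [Real.norm_eq_abs, abs_zero]
      positivity
  have hswap := MeasureTheory.integral_integral_swap
    (μ := volume.restrict (Ioo (-b) b)) (ν := volume.restrict (Ioo (-b) b))
    (f := ψ) int_ψ
  -- compute the t-first iterated integral
  have hT : (∫ t in Ioo (-b) b, ∫ z in Ioo (-b) b, ψ t z)
      = ∫ t in Ioo (-b) b, f' θ₀ t * (∫ s in t..b, (2 * F θ₀ s - 1)) := by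
    apply MeasureTheory.setIntegral_congr_fun measurableSet_Ioo
    intro t ht
    beta_reduce
    have h1 : ∀ z, ψ t z = (Ici t).indicator (fun z => f' θ₀ t * (2 * Fc z - 1)) z := by
      intro z
      rw [hψdef]
      by_cases hz : t ≤ z
      · simp [indicator_of_mem (mem_Ici.2 hz), hz]
      · simp [indicator_of_notMem (fun h => hz (mem_Ici.1 h)), hz]
    have e1 : (∫ z in Ioo (-b) b, ψ t z)
        = ∫ z in Ioo (-b) b, (Ici t).indicator (fun z => f' θ₀ t * (2 * Fc z - 1)) z :=
      MeasureTheory.setIntegral_congr_fun measurableSet_Ioo (fun z _ => h1 z)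
    rw [e1, MeasureTheory.setIntegral_indicator measurableSet_Ici]
    have h2 : Ioo (-b) b ∩ Ici t = Ico t b := by
      ext z
      simp only [mem_inter_iff, mem_Ioo, mem_Ici, mem_Ico]
      constructor
      · rintro ⟨⟨_, h⟩, h'⟩; exact ⟨h', h⟩
      · rintro ⟨h', h⟩; exact ⟨⟨lt_of_lt_of_le ht.1 h', h⟩, h'⟩
    rw [h2, Measure.restrict_congr_set Ico_ae_eq_Ioc,
      ← intervalIntegral.integral_of_le ht.2.le,
      intervalIntegral.integral_const_mul]
    congr 1
    apply intervalIntegral.integral_congr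
    intro s hs
    beta_reduce
    have hsIcc : s ∈ Icc (-b) b :=
      uIcc_subset_Icc (⟨ht.1.le, ht.2.le⟩ : t ∈ Icc (-b) b)
        (right_mem_Icc.2 (by linarith)) hs
    rw [hFc_eq s hsIcc]
  -- compute the z-first iterated integral
  have hZ : (∫ z in Ioo (-b) b, ∫ t in Ioo (-b) b, ψ t z)
      = ∫ z in Ioo (-b) b, (∫ t in (-b)..z, f' θ₀ t) * (2 * F θ₀ z - 1) := by
    apply MeasureTheory.setIntegral_congr_fun measurableSet_Ioo
    intro z hz
    beta_reduce
    have h1 : ∀ t, ψ t z = (Iic z).indicator (fun t => f' θ₀ t * (2 * Fc z - 1)) t := by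
      intro t
      rw [hψdef]
      by_cases htz : t ≤ z
      · simp [indicator_of_mem (mem_Iic.2 htz), htz]
      · simp [indicator_of_notMem (fun h => htz (mem_Iic.1 h)), htz]
    have e1 : (∫ t in Ioo (-b) b, ψ t z)
        = ∫ t in Ioo (-b) b, (Iic z).indicator (fun t => f' θ₀ t * (2 * Fc z - 1)) t :=
      MeasureTheory.setIntegral_congr_fun measurableSet_Ioo (fun t _ => h1 t)
    rw [e1, MeasureTheory.setIntegral_indicator measurableSet_Iic]
    have h2 : Ioo (-b) b ∩ Iic z = Ioc (-b) z := by
      ext t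
      simp only [mem_inter_iff, mem_Ioo, mem_Iic, mem_Ioc]
      constructor
      · rintro ⟨⟨h, _⟩, h'⟩; exact ⟨h, h'⟩
      · rintro ⟨h, h'⟩; exact ⟨⟨h, lt_of_le_of_lt h' hz.2⟩, h'⟩
    rw [h2, ← intervalIntegral.integral_of_le hz.1.le,
      intervalIntegral.integral_mul_const, hFc_eq z (hIcc hz)]
  have hval : (∫ α in Ioo (0:ℝ) 1, q' θ₀ α * (2 * α - 1))
      = -∫ z in (-b)..b, f' θ₀ z * (∫ t in z..b, (2 * F θ₀ t - 1)) := by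
    rw [hC, hIoc2, MeasureTheory.integral_neg, ← hZ, ← hswap, hT]
  have heqfun : (fun θ => ∫ α in (0:ℝ)..1, q θ α * (2 * α - 1))
      = fun θ => ∫ α in Ioo (0:ℝ) 1, q θ α * (2 * α - 1) := funext fun θ => hIoc _
  rw [heqfun, ← hval]
  exact stepB
end

section
/- Let b > 0 and let f : [-b, b] → ℝ be a continuous probability density that is strictly positive on (-b, b), with CDF F(z) = ∫_{-b}^{z} f(t) dt, so that F is continuous and strictly increasing on [-b, b] with inverse q : (0,1) → (-b, b). Then for every integrable function g : [-b, b] → ℝ, ∫₀¹ (2α − 1) · (∫_{-b}^{q(α)} g(z) dz) / f(q(α)) dα = ∫_{-b}^{b} g(z) · (∫_{z}^{b} (2F(t) − 1) dt) dz. -/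
open MeasureTheory Set

/-- Integral order switching and change of variables (α = F t, dα = f t dt)
used in Appendix B.1 to pass from the intermediate gradient formula to the
final Gini deviation gradient formula. -/
theorem gini_gradient_integral_switch
    (b : ℝ) (hb : 0 < b)
    (f : ℝ → ℝ)
    (hf_cont : ContinuousOn f (Set.Icc (-b) b))
    (hf_pos : ∀ z ∈ Set.Ioo (-b) b, 0 < f z)
    (hf_int : (∫ z in (-b)..b, f z) = 1)
    (F : ℝ → ℝ)
    (hF : ∀ z, F z = ∫ t in (-b)..z, f t)
    (hFmono : StrictMonoOn F (Set.Icc (-b) b))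
    (q : ℝ → ℝ)
    (hq_mem : ∀ α ∈ Set.Ioo (0:ℝ) 1, q α ∈ Set.Ioo (-b) b)
    (hq : ∀ α ∈ Set.Ioo (0:ℝ) 1, F (q α) = α)
    (g : ℝ → ℝ)
    (hg : IntegrableOn g (Set.Icc (-b) b)) :
    (∫ α in (0:ℝ)..1, (2 * α - 1) * (∫ z in (-b)..(q α), g z) / f (q α))
      = ∫ z in (-b)..b, g z * (∫ t in z..b, (2 * F t - 1)) := by
  have hbb : (-b : ℝ) ≤ b := by linarith
  have hFfun : F = fun u => ∫ t in (-b)..u, f t := funext hF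
  -- basic values of F
  have hF0 : F (-b) = 0 := by rw [hF]; simp
  have hF1 : F b = 1 := by rw [hF]; exact hf_int
  -- F maps the open interval into (0,1)
  have hFt_mem : ∀ t ∈ Set.Ioo (-b) b, F t ∈ Set.Ioo (0:ℝ) 1 := by
    intro t ht
    constructor
    · have := hFmono (Set.left_mem_Icc.2 hbb) (Set.Ioo_subset_Icc_self ht) ht.1
      rwa [hF0] at this
    · have := hFmono (Set.Ioo_subset_Icc_self ht) (Set.right_mem_Icc.2 hbb) ht.2
      rwa [hF1] at this
  -- interval integrability / continuity facts
  have hf_ii : IntervalIntegrable f volume (-b) b := by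
    apply ContinuousOn.intervalIntegrable
    rwa [Set.uIcc_of_le hbb]
  have hFcont : ContinuousOn F (Set.Icc (-b) b) := by
    rw [hFfun]
    have := intervalIntegral.continuousOn_primitive_interval
      (a := (-b)) (b := b) (f := f) (μ := volume) ?_
    · rwa [Set.uIcc_of_le hbb] at this
    · rw [Set.uIcc_of_le hbb]; exact hf_cont.integrableOn_Icc
  -- derivative of F on the open interval
  have hFd : ∀ t ∈ Set.Ioo (-b) b, HasDerivWithinAt F (f t) (Set.Ioo (-b) b) t := by
    intro t ht
    have hct : ContinuousAt f t :=
      hf_cont.continuousAt (Icc_mem_nhds ht.1 ht.2)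
    have hmeas : StronglyMeasurableAtFilter f (nhds t) volume :=
      ⟨Set.Icc (-b) b, Icc_mem_nhds ht.1 ht.2,
        hf_cont.aestronglyMeasurable measurableSet_Icc⟩
    have hii : IntervalIntegrable f volume (-b) t := by
      apply hf_ii.mono_set
      rw [Set.uIcc_of_le hbb, Set.uIcc_of_le ht.1.le]
      exact Set.Icc_subset_Icc le_rfl ht.2.le
    have := intervalIntegral.integral_hasDerivAt_right hii hmeas hct
    rw [← hFfun] at this
    exact this.hasDerivWithinAt
  have hInj : Set.InjOn F (Set.Ioo (-b) b) :=
    hFmono.injOn.mono Set.Ioo_subset_Icc_self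
  -- image of F on the open interval
  have himg : F '' Set.Ioo (-b) b = Set.Ioo (0:ℝ) 1 := by
    apply Set.Subset.antisymm
    · rintro _ ⟨t, ht, rfl⟩; exact hFt_mem t ht
    · intro α hα; exact ⟨q α, hq_mem α hα, hq α hα⟩
  -- q ∘ F = id on the open interval
  have hqF : ∀ t ∈ Set.Ioo (-b) b, q (F t) = t := by
    intro t ht
    exact hFmono.injOn (Set.Ioo_subset_Icc_self (hq_mem _ (hFt_mem t ht)))
      (Set.Ioo_subset_Icc_self ht) (hq _ (hFt_mem t ht))
  set H : ℝ → ℝ := fun α => (2 * α - 1) * (∫ z in (-b)..(q α), g z) / f (q α) with hH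
  -- change of variables
  have hchange : (∫ α in (0:ℝ)..1, H α)
      = ∫ t in Set.Ioo (-b) b, (2 * F t - 1) * (∫ z in (-b)..t, g z) := by
    rw [intervalIntegral.integral_of_le (by norm_num : (0:ℝ) ≤ 1),
      MeasureTheory.integral_Ioc_eq_integral_Ioo, ← himg,
      integral_image_eq_integral_abs_deriv_smul measurableSet_Ioo hFd hInj H]
    apply MeasureTheory.setIntegral_congr_fun measurableSet_Ioo
    intro t ht
    have hft : 0 < f t := hf_pos t ht
    simp only [hH, smul_eq_mul, hqF t ht, abs_of_pos hft]
    field_simp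
  rw [hchange]
  -- Fubini on the triangle
  set φ : ℝ → ℝ := fun t => 2 * F t - 1 with hφ
  have hφ_cont : ContinuousOn φ (Set.Icc (-b) b) := by
    exact (continuousOn_const.mul hFcont).sub continuousOn_const
  have hφ_int : IntegrableOn φ (Set.Ioc (-b) b) :=
    (hφ_cont.integrableOn_Icc).mono_set Set.Ioc_subset_Icc_self
  have hg_int : IntegrableOn g (Set.Ioc (-b) b) :=
    hg.mono_set Set.Ioc_subset_Icc_self
  set K : ℝ × ℝ → ℝ :=
    Set.indicator {p : ℝ × ℝ | p.2 ≤ p.1} (fun p => φ p.1 * g p.2) with hKdef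
  have hK_int : Integrable K
      ((volume.restrict (Set.Ioc (-b) b)).prod (volume.restrict (Set.Ioc (-b) b))) :=
    (hφ_int.mul_prod hg_int).indicator (measurableSet_le measurable_snd measurable_fst)
  have hswap := MeasureTheory.integral_integral_swap
    (f := fun t z => K (t, z))
    (μ := volume.restrict (Set.Ioc (-b) b)) (ν := volume.restrict (Set.Ioc (-b) b))
    (by exact hK_int)
  -- compute the left (t-outer) iterated integral
  have hleft : (∫ t in Set.Ioc (-b) b, ∫ z in Set.Ioc (-b) b, K (t, z))
      = ∫ t in Set.Ioo (-b) b, (2 * F t - 1) * (∫ z in (-b)..t, g z) := by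
    rw [MeasureTheory.integral_Ioc_eq_integral_Ioo]
    apply MeasureTheory.setIntegral_congr_fun measurableSet_Ioo
    intro t ht
    dsimp only
    have h1 : (fun z => K (t, z)) = Set.indicator (Set.Iic t) (fun z => φ t * g z) := by
      funext z
      by_cases hz : z ≤ t
      · simp [hKdef, Set.indicator_of_mem, hz, Set.mem_setOf_eq]
      · simp [hKdef, Set.indicator_of_notMem, hz, Set.mem_setOf_eq]
    rw [h1, MeasureTheory.setIntegral_indicator measurableSet_Iic,
      Set.Ioc_inter_Iic, min_eq_right ht.2.le,
      MeasureTheory.integral_const_mul,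
      intervalIntegral.integral_of_le ht.1.le]
  -- compute the right (z-outer) iterated integral
  have hright : (∫ z in Set.Ioc (-b) b, ∫ t in Set.Ioc (-b) b, K (t, z))
      = ∫ z in (-b)..b, g z * (∫ t in z..b, (2 * F t - 1)) := by
    rw [intervalIntegral.integral_of_le hbb]
    apply MeasureTheory.setIntegral_congr_fun measurableSet_Ioc
    intro z hz
    dsimp only
    have h1 : (fun t => K (t, z)) = Set.indicator (Set.Ici z) (fun t => φ t * g z) := by
      funext t
      by_cases hzt : z ≤ t
      · simp [hKdef, Set.indicator_of_mem, hzt, Set.mem_setOf_eq]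
      · simp [hKdef, Set.indicator_of_notMem, hzt, Set.mem_setOf_eq]
    have h2 : Set.Ioc (-b) b ∩ Set.Ici z = Set.Icc z b := by
      ext t
      simp only [Set.mem_inter_iff, Set.mem_Ioc, Set.mem_Ici, Set.mem_Icc]
      constructor
      · rintro ⟨⟨_, h⟩, hzt⟩; exact ⟨hzt, h⟩
      · rintro ⟨hzt, h⟩; exact ⟨⟨lt_of_lt_of_le hz.1 hzt, h⟩, hzt⟩
    rw [h1, MeasureTheory.setIntegral_indicator measurableSet_Ici, h2,
      MeasureTheory.integral_Icc_eq_integral_Ioc,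
      MeasureTheory.integral_mul_const,
      intervalIntegral.integral_of_le hz.2, mul_comm]
  rw [← hleft, hswap, hright]
end

section
/- Let μ be a probability measure on ℝ with finite second moment, with mean m = ∫ x dμ, variance V = ∫ x² dμ − m², and Gini deviation D = (1/2) ∫∫ |x − y| d(μ × μ)(x, y). Then the standard deviation dominates √3 times the Gini deviation: √V ≥ √3 · D. -/
open MeasureTheory Set

lemma measurable_rsign : Measurable Real.sign := by
  have : (Real.sign : ℝ → ℝ) = fun r => if r < 0 then -1 else if 0 < r then 1 else 0 := by
    funext r; rfl
  rw [this]
  exact Measurable.ite (measurableSet_lt measurable_id measurable_const) measurable_const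
    (Measurable.ite (measurableSet_lt measurable_const measurable_id) measurable_const
      measurable_const)

lemma abs_rsign_le (r : ℝ) : |Real.sign r| ≤ 1 := by
  rcases lt_trichotomy r 0 with h | h | h <;>
    simp [Real.sign_of_neg, Real.sign_of_pos, h]

lemma int_bdd {α : Type*} [MeasurableSpace α] (μ : Measure α) [IsFiniteMeasure μ]
    {f : α → ℝ} (hf : AEStronglyMeasurable f μ) (C : ℝ) (h : ∀ x, |f x| ≤ C) :
    Integrable f μ :=
  Integrable.mono' (integrable_const C) hf
    (Filter.Eventually.of_forall (by simpa [Real.norm_eq_abs] using h))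

lemma abs_sub_sign (a b : ℝ) :
    |a - b| = a * Real.sign (a - b) + b * Real.sign (b - a) := by
  rcases lt_trichotomy a b with h | h | h
  · rw [Real.sign_of_neg (by linarith : a - b < 0), Real.sign_of_pos (by linarith : 0 < b - a),
      abs_of_neg (by linarith : a - b < 0)]; ring
  · subst h; simp
  · rw [Real.sign_of_pos (by linarith : 0 < a - b), Real.sign_of_neg (by linarith : b - a < 0),
      abs_of_pos (by linarith : 0 < a - b)]; ring

lemma triple_sign_le (a b c : ℝ) :
    Real.sign (a - b) * Real.sign (a - c) + Real.sign (b - a) * Real.sign (b - c)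
      + Real.sign (c - a) * Real.sign (c - b) ≤ 1 := by
  have sp : ∀ x y : ℝ, y < x → Real.sign (x - y) = 1 := fun x y h =>
    Real.sign_of_pos (by linarith)
  have sn : ∀ x y : ℝ, x < y → Real.sign (x - y) = -1 := fun x y h =>
    Real.sign_of_neg (by linarith)
  have sz : ∀ x y : ℝ, x = y → Real.sign (x - y) = 0 := fun x y h => by
    rw [h, sub_self, Real.sign_zero]
  rcases lt_trichotomy a b with h1 | h1 | h1 <;>
    rcases lt_trichotomy a c with h2 | h2 | h2 <;>
      rcases lt_trichotomy b c with h3 | h3 | h3 <;>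
        simp only [sp _ _, sn _ _, sz _ _, h1, h2, h3] <;> norm_num

section main
variable (μ : Measure ℝ) [IsProbabilityMeasure μ]

noncomputable def gH : ℝ → ℝ := fun x => ∫ y, Real.sign (x - y) ∂μ

lemma gH_sm : StronglyMeasurable (gH μ) := by
  have : Measurable fun p : ℝ × ℝ => Real.sign (p.1 - p.2) :=
    measurable_rsign.comp (measurable_fst.sub measurable_snd)
  exact this.stronglyMeasurable.integral_prod_right'

lemma gH_abs_le (x : ℝ) : |gH μ x| ≤ 1 := by
  calc |gH μ x| ≤ ∫ y, |Real.sign (x - y)| ∂μ := by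
        simpa [Real.norm_eq_abs, gH] using
          norm_integral_le_integral_norm (fun y => Real.sign (x - y)) (μ := μ)
    _ ≤ ∫ _, (1 : ℝ) ∂μ := by
        refine integral_mono ?_ (integrable_const 1) (fun y => abs_rsign_le _)
        · exact int_bdd μ ((measurable_rsign.comp (measurable_const.sub measurable_id)).abs
            |>.aestronglyMeasurable) 1 (fun y => by simpa using abs_rsign_le (x - y))
    _ = 1 := by simp

-- integrability of sign-products (bounded by 1) on the product measure
lemma int_sign_prod {f : ℝ × ℝ → ℝ} (hm : Measurable f) (C : ℝ) (hb : ∀ p, |f p| ≤ C) :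
    Integrable f (μ.prod μ) :=
  int_bdd (μ.prod μ) hm.aestronglyMeasurable C hb

lemma gH_int_zero : ∫ x, gH μ x ∂μ = 0 := by
  have mS : Measurable fun p : ℝ × ℝ => Real.sign (p.1 - p.2) :=
    measurable_rsign.comp (measurable_fst.sub measurable_snd)
  have hint : Integrable (fun p : ℝ × ℝ => Real.sign (p.1 - p.2)) (μ.prod μ) :=
    int_sign_prod μ mS 1 (fun p => abs_rsign_le _)
  have h1 : ∫ x, gH μ x ∂μ = ∫ p : ℝ × ℝ, Real.sign (p.1 - p.2) ∂(μ.prod μ) := by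
    simp only [gH]
    exact (integral_prod (fun p : ℝ × ℝ => Real.sign (p.1 - p.2)) hint).symm
  have h2 : ∫ p : ℝ × ℝ, Real.sign (p.1 - p.2) ∂(μ.prod μ)
      = ∫ p : ℝ × ℝ, Real.sign (p.2 - p.1) ∂(μ.prod μ) := by
    have := integral_prod_swap (μ := μ) (ν := μ) (fun p : ℝ × ℝ => Real.sign (p.2 - p.1))
    simpa using this
  have h3 : ∀ p : ℝ × ℝ, Real.sign (p.2 - p.1) = - Real.sign (p.1 - p.2) := by
    intro p; rw [← Real.sign_neg]; ring_nf
  rw [h1]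
  have := h2
  simp only [h3, integral_neg] at this
  linarith


lemma intb_le_one {f : ℝ → ℝ} (hm : AEStronglyMeasurable f μ) (hb : ∀ y, |f y| ≤ 1) :
    |∫ y, f y ∂μ| ≤ 1 := by
  calc |∫ y, f y ∂μ| ≤ ∫ y, |f y| ∂μ := by
        simpa [Real.norm_eq_abs] using norm_integral_le_integral_norm f (μ := μ)
    _ ≤ ∫ _, (1 : ℝ) ∂μ := integral_mono (int_bdd μ hm 1 hb).abs
        (integrable_const 1) hb
    _ = 1 := by simp

lemma gini_rep (h1 : Integrable (fun x => x) μ) :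
    ∫ p : ℝ × ℝ, |p.1 - p.2| ∂(μ.prod μ) = 2 * ∫ x, x * gH μ x ∂μ := by
  have mS : Measurable fun p : ℝ × ℝ => Real.sign (p.1 - p.2) :=
    measurable_rsign.comp (measurable_fst.sub measurable_snd)
  have mS' : Measurable fun p : ℝ × ℝ => Real.sign (p.2 - p.1) :=
    measurable_rsign.comp (measurable_snd.sub measurable_fst)
  have habs1 : Integrable (fun p : ℝ × ℝ => |p.1|) (μ.prod μ) := by
    simpa using h1.abs.mul_prod (integrable_const (1 : ℝ))
  have habs2 : Integrable (fun p : ℝ × ℝ => |p.2|) (μ.prod μ) := by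
    simpa using (integrable_const (1 : ℝ)).mul_prod h1.abs
  have I1 : Integrable (fun p : ℝ × ℝ => p.1 * Real.sign (p.1 - p.2)) (μ.prod μ) := by
    refine habs1.mono' ((measurable_fst.mul mS).aestronglyMeasurable)
      (Filter.Eventually.of_forall fun p => ?_)
    rw [Real.norm_eq_abs, abs_mul]
    exact mul_le_of_le_one_right (abs_nonneg _) (abs_rsign_le _)
  have I2 : Integrable (fun p : ℝ × ℝ => p.2 * Real.sign (p.2 - p.1)) (μ.prod μ) := by
    refine habs2.mono' ((measurable_snd.mul mS').aestronglyMeasurable)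
      (Filter.Eventually.of_forall fun p => ?_)
    rw [Real.norm_eq_abs, abs_mul]
    exact mul_le_of_le_one_right (abs_nonneg _) (abs_rsign_le _)
  have hpt : (fun p : ℝ × ℝ => |p.1 - p.2|)
      = fun p => p.1 * Real.sign (p.1 - p.2) + p.2 * Real.sign (p.2 - p.1) :=
    funext fun p => abs_sub_sign _ _
  rw [hpt, integral_add I1 I2]
  have hswap : ∫ p : ℝ × ℝ, p.2 * Real.sign (p.2 - p.1) ∂(μ.prod μ)
      = ∫ p : ℝ × ℝ, p.1 * Real.sign (p.1 - p.2) ∂(μ.prod μ) := by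
    have := integral_prod_swap (μ := μ) (ν := μ)
      (fun p : ℝ × ℝ => p.2 * Real.sign (p.2 - p.1))
    simpa using this.symm
  have hrepr : ∫ p : ℝ × ℝ, p.1 * Real.sign (p.1 - p.2) ∂(μ.prod μ)
      = ∫ x, x * gH μ x ∂μ := by
    rw [integral_prod _ I1]
    simp_rw [integral_const_mul]
    rfl
  rw [hswap, hrepr]; ring

lemma gH_sq_le : ∫ x, gH μ x ^ 2 ∂μ ≤ 1 / 3 := by
  have mHm : Measurable (gH μ) := (gH_sm μ).measurable
  set ψ : ℝ → ℝ := fun x => ∫ y, Real.sign (y - x) * gH μ y ∂μ with hψdef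
  have sb : ∀ a b : ℝ, |Real.sign (a - b) * gH μ a| ≤ 1 := fun a b => by
    rw [abs_mul]
    exact mul_le_one₀ (abs_rsign_le _) (abs_nonneg _) (gH_abs_le μ a)
  have mψ : StronglyMeasurable ψ :=
    (((measurable_rsign.comp (measurable_snd.sub measurable_fst)).mul
      (mHm.comp measurable_snd)).stronglyMeasurable).integral_prod_right'
  have hψb : ∀ x, |ψ x| ≤ 1 := fun x =>
    intb_le_one μ ((measurable_rsign.comp (measurable_id.sub measurable_const)).mul
      mHm).aestronglyMeasurable (fun y => sb y x)
  -- pointwise bound after integrating out z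
  have W : ∀ x y : ℝ, Real.sign (x - y) * gH μ x + Real.sign (y - x) * gH μ y
      + (∫ z, Real.sign (z - x) * Real.sign (z - y) ∂μ) ≤ 1 := by
    intro x y
    have ssb : ∀ a b c d : ℝ, |Real.sign (a - b) * Real.sign (c - d)| ≤ 1 := fun a b c d => by
      rw [abs_mul]
      exact mul_le_one₀ (abs_rsign_le _) (abs_nonneg _) (abs_rsign_le _)
    have j1 : Integrable (fun z => Real.sign (x - y) * Real.sign (x - z)) μ :=
      int_bdd μ (measurable_const.mul
        (measurable_rsign.comp (measurable_const.sub measurable_id))).aestronglyMeasurable 1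
        (fun z => ssb _ _ _ _)
    have j2 : Integrable (fun z => Real.sign (y - x) * Real.sign (y - z)) μ :=
      int_bdd μ (measurable_const.mul
        (measurable_rsign.comp (measurable_const.sub measurable_id))).aestronglyMeasurable 1
        (fun z => ssb _ _ _ _)
    have j3 : Integrable (fun z => Real.sign (z - x) * Real.sign (z - y)) μ :=
      int_bdd μ ((measurable_rsign.comp (measurable_id.sub measurable_const)).mul
        (measurable_rsign.comp (measurable_id.sub measurable_const))).aestronglyMeasurable 1
        (fun z => ssb _ _ _ _)
    have e1 : Real.sign (x - y) * gH μ x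
        = ∫ z, Real.sign (x - y) * Real.sign (x - z) ∂μ := (integral_const_mul _ _).symm
    have e2 : Real.sign (y - x) * gH μ y
        = ∫ z, Real.sign (y - x) * Real.sign (y - z) ∂μ := (integral_const_mul _ _).symm
    have j12 : Integrable (fun z => Real.sign (x - y) * Real.sign (x - z)
        + Real.sign (y - x) * Real.sign (y - z)) μ := j1.add j2
    have j123 : Integrable (fun z => Real.sign (x - y) * Real.sign (x - z)
        + Real.sign (y - x) * Real.sign (y - z)
        + Real.sign (z - x) * Real.sign (z - y)) μ := j12.add j3
    have comb : Real.sign (x - y) * gH μ x + Real.sign (y - x) * gH μ y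
        + (∫ z, Real.sign (z - x) * Real.sign (z - y) ∂μ)
        = ∫ z, (Real.sign (x - y) * Real.sign (x - z) + Real.sign (y - x) * Real.sign (y - z)
          + Real.sign (z - x) * Real.sign (z - y)) ∂μ := by
      rw [e1, e2, ← integral_add j1 j2, ← integral_add j12 j3]
    rw [comb]
    calc ∫ z, (Real.sign (x - y) * Real.sign (x - z) + Real.sign (y - x) * Real.sign (y - z)
          + Real.sign (z - x) * Real.sign (z - y)) ∂μ
        ≤ ∫ _, (1 : ℝ) ∂μ :=
          integral_mono j123 (integrable_const 1)
            (fun z => triple_sign_le x y z)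
      _ = 1 := by simp
  -- integrate the bound over y
  have key : ∀ x, gH μ x ^ 2 + ψ x + ψ x ≤ 1 := by
    intro x
    have i1 : Integrable (fun y => Real.sign (x - y) * gH μ x) μ :=
      int_bdd μ ((measurable_rsign.comp (measurable_const.sub measurable_id)).mul
        measurable_const).aestronglyMeasurable 1 (fun y => by
          rw [abs_mul]
          exact mul_le_one₀ (abs_rsign_le _) (abs_nonneg _) (gH_abs_le μ x))
    have i2 : Integrable (fun y => Real.sign (y - x) * gH μ y) μ :=
      int_bdd μ ((measurable_rsign.comp (measurable_id.sub measurable_const)).mul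
        mHm).aestronglyMeasurable 1 (fun y => sb y x)
    have mR : StronglyMeasurable fun y => ∫ z, Real.sign (z - x) * Real.sign (z - y) ∂μ :=
      (((measurable_rsign.comp (measurable_snd.sub measurable_const)).mul
        (measurable_rsign.comp (measurable_snd.sub measurable_fst))).stronglyMeasurable
        ).integral_prod_right'
    have i3 : Integrable (fun y => ∫ z, Real.sign (z - x) * Real.sign (z - y) ∂μ) μ :=
      int_bdd μ mR.aestronglyMeasurable 1 (fun y =>
        intb_le_one μ ((measurable_rsign.comp (measurable_id.sub measurable_const)).mul
          (measurable_rsign.comp (measurable_id.sub measurable_const))).aestronglyMeasurable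
          (fun z => by
            rw [abs_mul]
            exact mul_le_one₀ (abs_rsign_le _) (abs_nonneg _) (abs_rsign_le _)))
    have sum_le : ∫ y, (Real.sign (x - y) * gH μ x + Real.sign (y - x) * gH μ y
        + (∫ z, Real.sign (z - x) * Real.sign (z - y) ∂μ)) ∂μ ≤ 1 := by
      calc _ ≤ ∫ _, (1 : ℝ) ∂μ :=
            integral_mono ((i1.add i2).add i3) (integrable_const 1) (fun y => W x y)
        _ = 1 := by simp
    have split : ∫ y, (Real.sign (x - y) * gH μ x + Real.sign (y - x) * gH μ y
        + (∫ z, Real.sign (z - x) * Real.sign (z - y) ∂μ)) ∂μ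
        = (∫ y, Real.sign (x - y) * gH μ x ∂μ)
          + (∫ y, Real.sign (y - x) * gH μ y ∂μ)
          + ∫ y, (∫ z, Real.sign (z - x) * Real.sign (z - y) ∂μ) ∂μ := by
      have i12 : Integrable (fun y => Real.sign (x - y) * gH μ x
          + Real.sign (y - x) * gH μ y) μ := i1.add i2
      rw [integral_add i12 i3, integral_add i1 i2]
    have p1 : ∫ y, Real.sign (x - y) * gH μ x ∂μ = gH μ x ^ 2 := by
      rw [integral_mul_const]
      have : (∫ y, Real.sign (x - y) ∂μ) = gH μ x := rfl
      rw [this, sq]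
    have p3 : ∫ y, (∫ z, Real.sign (z - x) * Real.sign (z - y) ∂μ) ∂μ = ψ x := by
      have hintu : Integrable
          (Function.uncurry fun y z => Real.sign (z - x) * Real.sign (z - y)) (μ.prod μ) :=
        int_sign_prod μ ((measurable_rsign.comp (measurable_snd.sub measurable_const)).mul
          (measurable_rsign.comp (measurable_snd.sub measurable_fst))) 1
          (fun p => by
            show |Real.sign (p.2 - x) * Real.sign (p.2 - p.1)| ≤ 1
            rw [abs_mul]
            exact mul_le_one₀ (abs_rsign_le _) (abs_nonneg _) (abs_rsign_le _))
      rw [integral_integral_swap hintu]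
      simp_rw [integral_const_mul]
      rfl
    rw [split, p1, p3] at sum_le
    have : ∫ y, Real.sign (y - x) * gH μ y ∂μ = ψ x := rfl
    rw [this] at sum_le
    linarith
  -- integrate over x
  have ih2 : Integrable (fun x => gH μ x ^ 2) μ :=
    int_bdd μ (mHm.pow_const 2).aestronglyMeasurable 1 (fun x => by
      rw [abs_pow]
      exact pow_le_one₀ (abs_nonneg _) (gH_abs_le μ x))
  have iψ : Integrable ψ μ := int_bdd μ mψ.aestronglyMeasurable 1 hψb
  have ihψ : Integrable (fun x => gH μ x ^ 2 + ψ x) μ := ih2.add iψ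
  have ihψψ : Integrable (fun x => gH μ x ^ 2 + ψ x + ψ x) μ := ihψ.add iψ
  have main_le : (∫ x, gH μ x ^ 2 ∂μ) + (∫ x, ψ x ∂μ) + ∫ x, ψ x ∂μ ≤ 1 := by
    have h := integral_mono ihψψ (integrable_const 1) key
    rw [integral_add ihψ iψ, integral_add ih2 iψ] at h
    simpa using h
  have ψint : ∫ x, ψ x ∂μ = ∫ x, gH μ x ^ 2 ∂μ := by
    have hprod : Integrable (fun p : ℝ × ℝ => Real.sign (p.2 - p.1) * gH μ p.2) (μ.prod μ) :=
      int_sign_prod μ ((measurable_rsign.comp (measurable_snd.sub measurable_fst)).mul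
        (mHm.comp measurable_snd)) 1 (fun p => sb _ _)
    have hprod' : Integrable (fun p : ℝ × ℝ => Real.sign (p.1 - p.2) * gH μ p.1) (μ.prod μ) :=
      int_sign_prod μ ((measurable_rsign.comp (measurable_fst.sub measurable_snd)).mul
        (mHm.comp measurable_fst)) 1 (fun p => sb _ _)
    have e1 : ∫ x, ψ x ∂μ
        = ∫ p : ℝ × ℝ, Real.sign (p.2 - p.1) * gH μ p.2 ∂(μ.prod μ) :=
      (integral_prod _ hprod).symm
    have e2 : ∫ p : ℝ × ℝ, Real.sign (p.2 - p.1) * gH μ p.2 ∂(μ.prod μ)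
        = ∫ p : ℝ × ℝ, Real.sign (p.1 - p.2) * gH μ p.1 ∂(μ.prod μ) := by
      have := integral_prod_swap (μ := μ) (ν := μ)
        (fun p : ℝ × ℝ => Real.sign (p.2 - p.1) * gH μ p.2)
      simpa using this.symm
    have e3 : ∫ p : ℝ × ℝ, Real.sign (p.1 - p.2) * gH μ p.1 ∂(μ.prod μ)
        = ∫ x, gH μ x ^ 2 ∂μ := by
      rw [integral_prod _ hprod']
      simp_rw [integral_mul_const]
      congr 1
      funext x
      have : (∫ y, Real.sign (x - y) ∂μ) = gH μ x := rfl
      rw [this, sq]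
    rw [e1, e2, e3]
  rw [ψint] at main_le
  linarith


end main

/-- Glasser's inequality: for a probability measure with finite second moment,
the standard deviation dominates √3 times the Gini deviation. -/
theorem glasser_inequality
    (μ : Measure ℝ) [IsProbabilityMeasure μ]
    (h2 : Integrable (fun x => x ^ 2) μ) :
    Real.sqrt ((∫ x, x ^ 2 ∂μ) - (∫ x, x ∂μ) ^ 2)
      ≥ Real.sqrt 3 * ((1 / 2 : ℝ) * ∫ p : ℝ × ℝ, |p.1 - p.2| ∂(μ.prod μ)) := by
  have h1 : Integrable (fun x => x) μ := by
    have hb : Integrable (fun x : ℝ => 1 + x ^ 2) μ := (integrable_const 1).add h2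
    refine hb.mono' aestronglyMeasurable_id
      (Filter.Eventually.of_forall fun x => ?_)
    rw [Real.norm_eq_abs]
    nlinarith [sq_abs x, abs_nonneg x, sq_nonneg (|x| - 1)]
  set m : ℝ := ∫ x, x ∂μ with hm
  have mHm : Measurable (gH μ) := (gH_sm μ).measurable
  have hH : Integrable (gH μ) μ := int_bdd μ mHm.aestronglyMeasurable 1 (gH_abs_le μ)
  have hxh : Integrable (fun x => x * gH μ x) μ := by
    refine h1.abs.mono' (measurable_id.mul mHm).aestronglyMeasurable
      (Filter.Eventually.of_forall fun x => ?_)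
    rw [Real.norm_eq_abs, abs_mul]
    exact mul_le_of_le_one_right (abs_nonneg _) (gH_abs_le μ x)
  have hmh : Integrable (fun x => m * gH μ x) μ := hH.const_mul m
  -- centered representation
  have hcent : ∫ x, x * gH μ x ∂μ = ∫ x, (x - m) * gH μ x ∂μ := by
    have : (fun x => (x - m) * gH μ x) = fun x => x * gH μ x - m * gH μ x := by
      funext x; ring
    rw [this, integral_sub hxh hmh, integral_const_mul, gH_int_zero μ]
    ring
  have grep := gini_rep μ h1
  -- integrable squares
  have hfsq : Integrable (fun x => (x - m) ^ 2) μ := by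
    have e : (fun x : ℝ => (x - m) ^ 2) = fun x => x ^ 2 - 2 * m * x + m ^ 2 := by
      funext x; ring
    rw [e]
    exact (h2.sub (h1.const_mul (2 * m))).add (integrable_const _)
  have hgsq : Integrable (fun x => gH μ x ^ 2) μ :=
    int_bdd μ (mHm.pow_const 2).aestronglyMeasurable 1 (fun x => by
      rw [abs_pow]; exact pow_le_one₀ (abs_nonneg _) (gH_abs_le μ x))
  -- Memℒp for Cauchy–Schwarz
  have hofr : (ENNReal.ofReal (2 : ℝ)) = 2 := by norm_num
  have hf2 : MemLp (fun x => x - m) (ENNReal.ofReal (2 : ℝ)) μ := by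
    rw [hofr]
    exact (memLp_two_iff_integrable_sq
      (h1.aestronglyMeasurable.sub aestronglyMeasurable_const)).2 hfsq
  have hg2 : MemLp (gH μ) (ENNReal.ofReal (2 : ℝ)) μ := by
    rw [hofr]
    exact (memLp_two_iff_integrable_sq mHm.aestronglyMeasurable).2 hgsq
  have hpq : Real.HolderConjugate 2 2 := by constructor <;> norm_num
  have CS := integral_mul_norm_le_Lp_mul_Lq hpq hf2 hg2
  -- rewrite the norms
  have habs2 : ∀ t : ℝ, ‖t‖ ^ (2 : ℝ) = t ^ 2 := fun t => by
    rw [Real.norm_eq_abs, show (2 : ℝ) = ((2 : ℕ) : ℝ) by norm_num, Real.rpow_natCast, sq_abs]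
  simp only [habs2] at CS
  have hVnn : 0 ≤ ∫ x, (x - m) ^ 2 ∂μ := integral_nonneg fun x => sq_nonneg _
  have hGnn : 0 ≤ ∫ x, gH μ x ^ 2 ∂μ := integral_nonneg fun x => sq_nonneg _
  have hsqrt : (∫ x, (x - m) ^ 2 ∂μ) ^ ((1 : ℝ) / 2) * (∫ x, gH μ x ^ 2 ∂μ) ^ ((1 : ℝ) / 2)
      = Real.sqrt (∫ x, (x - m) ^ 2 ∂μ) * Real.sqrt (∫ x, gH μ x ^ 2 ∂μ) := by
    rw [Real.sqrt_eq_rpow, Real.sqrt_eq_rpow]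
  rw [hsqrt] at CS
  -- bound the centered integral
  have habsint : Integrable (fun x => ‖x - m‖ * ‖gH μ x‖) μ := by
    refine ((h1.sub (integrable_const m)).abs).mono'
      (((measurable_id.sub measurable_const).norm).mul mHm.norm).aestronglyMeasurable
      (Filter.Eventually.of_forall fun x => ?_)
    rw [Real.norm_eq_abs, abs_mul, Real.norm_eq_abs, Real.norm_eq_abs, abs_abs, abs_abs]
    exact mul_le_of_le_one_right (abs_nonneg _) (gH_abs_le μ x)
  have hch : Integrable (fun x => (x - m) * gH μ x) μ := by
    refine ((h1.sub (integrable_const m)).abs).mono'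
      ((measurable_id.sub measurable_const).mul mHm).aestronglyMeasurable
      (Filter.Eventually.of_forall fun x => ?_)
    rw [Real.norm_eq_abs, abs_mul]
    exact mul_le_of_le_one_right (abs_nonneg _) (gH_abs_le μ x)
  have step1 : ∫ x, (x - m) * gH μ x ∂μ ≤ ∫ x, ‖x - m‖ * ‖gH μ x‖ ∂μ := by
    refine integral_mono hch habsint fun x => ?_
    rw [Real.norm_eq_abs, Real.norm_eq_abs, ← abs_mul]
    exact le_abs_self _
  have step2 : ∫ x, (x - m) * gH μ x ∂μ
      ≤ Real.sqrt (∫ x, (x - m) ^ 2 ∂μ) * Real.sqrt (1 / 3) := by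
    refine (step1.trans CS).trans ?_
    exact mul_le_mul_of_nonneg_left (Real.sqrt_le_sqrt (gH_sq_le μ)) (Real.sqrt_nonneg _)
  -- variance identity
  have hV : ∫ x, (x - m) ^ 2 ∂μ = (∫ x, x ^ 2 ∂μ) - m ^ 2 := by
    have e : (fun x : ℝ => (x - m) ^ 2) = fun x => x ^ 2 - 2 * m * x + m ^ 2 := by
      funext x; ring
    have isub : Integrable (fun x : ℝ => x ^ 2 - 2 * m * x) μ :=
      h2.sub (h1.const_mul (2 * m))
    rw [e, integral_add isub (integrable_const _),
      integral_sub h2 (h1.const_mul (2 * m)), integral_const_mul, integral_const]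
    simp [← hm]
    ring
  -- final assembly
  rw [ge_iff_le, grep, hcent]
  have h3nn : (0 : ℝ) ≤ Real.sqrt 3 := Real.sqrt_nonneg 3
  calc Real.sqrt 3 * (1 / 2 * (2 * ∫ x, (x - m) * gH μ x ∂μ))
      = Real.sqrt 3 * ∫ x, (x - m) * gH μ x ∂μ := by ring
    _ ≤ Real.sqrt 3 * (Real.sqrt (∫ x, (x - m) ^ 2 ∂μ) * Real.sqrt (1 / 3)) :=
        mul_le_mul_of_nonneg_left step2 h3nn
    _ = Real.sqrt (∫ x, (x - m) ^ 2 ∂μ) * (Real.sqrt 3 * Real.sqrt (1 / 3)) := by ring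
    _ = Real.sqrt (∫ x, (x - m) ^ 2 ∂μ) := by
        rw [← Real.sqrt_mul (by norm_num : (0 : ℝ) ≤ 3)]
        norm_num
    _ = Real.sqrt ((∫ x, x ^ 2 ∂μ) - (∫ x, x ∂μ) ^ 2) := by rw [hV, hm]
end

section
/- Let μ and ν be probability measures on ℝ with bounded support, and suppose μ is smaller than ν in convex order, i.e. ∫ ψ dμ ≤ ∫ ψ dν for every continuous convex function ψ : ℝ → ℝ. Then the Gini deviations are ordered: (1/2) ∫∫ |x − y| d(μ × μ)(x, y) ≤ (1/2) ∫∫ |x − y| d(ν × ν)(x, y). -/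
open MeasureTheory Set

private lemma gini_aux_integrable {α : Type*} [MeasurableSpace α] {m : Measure α}
    [IsFiniteMeasure m] {f : α → ℝ} (hf : AEStronglyMeasurable f m) {C : ℝ}
    (h : ∀ᵐ x ∂m, |f x| ≤ C) : Integrable f m :=
  Integrable.mono' (integrable_const C) hf (by simpa [Real.norm_eq_abs] using h)

private lemma gini_aux_ae_bound {m : Measure ℝ} {Rm R : ℝ}
    (hsupp : m (Set.Icc (-Rm) Rm)ᶜ = 0) (hR : Rm ≤ R) : ∀ᵐ x ∂m, |x| ≤ R := by
  rw [ae_iff]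
  refine measure_mono_null ?_ hsupp
  intro x hx
  simp only [mem_setOf_eq, not_le] at hx
  simp only [mem_compl_iff, mem_Icc, not_and_or, not_le]
  rcases lt_abs.mp (lt_of_le_of_lt hR hx) with h | h
  · right; exact h
  · left; linarith

private lemma gini_aux_prod_ae {m m' : Measure ℝ} [SFinite m] [SFinite m'] {R : ℝ}
    (hm : ∀ᵐ x ∂m, |x| ≤ R) (hm' : ∀ᵐ x ∂m', |x| ≤ R) :
    ∀ᵐ p ∂(m.prod m'), |p.1| ≤ R ∧ |p.2| ≤ R := by
  rw [ae_iff] at hm hm' ⊢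
  refine measure_mono_null (?_ : _ ⊆ ({x | ¬ |x| ≤ R} ×ˢ univ) ∪ (univ ×ˢ {x | ¬ |x| ≤ R})) ?_
  · intro p hp
    simp only [mem_setOf_eq, not_and_or] at hp
    rcases hp with h | h
    · exact Or.inl ⟨h, mem_univ _⟩
    · exact Or.inr ⟨mem_univ _, h⟩
  · refine measure_union_null ?_ ?_
    · rw [Measure.prod_prod, hm, zero_mul]
    · rw [Measure.prod_prod, hm', mul_zero]

/-- Convex order consistency of the Gini deviation: if `μ ≤_cx ν` (both with
bounded support), then `D(μ) ≤ D(ν)`. -/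
theorem convex_order_implies_gini_deviation_le
    (μ ν : Measure ℝ) [IsProbabilityMeasure μ] [IsProbabilityMeasure ν]
    (Rμ : ℝ) (hμsupp : μ (Set.Icc (-Rμ) Rμ)ᶜ = 0)
    (Rν : ℝ) (hνsupp : ν (Set.Icc (-Rν) Rν)ᶜ = 0)
    (hcx : ∀ ψ : ℝ → ℝ, Continuous ψ → ConvexOn ℝ Set.univ ψ →
      (∫ x, ψ x ∂μ) ≤ ∫ x, ψ x ∂ν) :
    (1 / 2 : ℝ) * ∫ p : ℝ × ℝ, |p.1 - p.2| ∂(μ.prod μ)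
      ≤ (1 / 2 : ℝ) * ∫ p : ℝ × ℝ, |p.1 - p.2| ∂(ν.prod ν) := by
  set R : ℝ := max Rμ Rν with hRdef
  have hμae : ∀ᵐ x ∂μ, |x| ≤ R := gini_aux_ae_bound hμsupp (le_max_left _ _)
  have hνae : ∀ᵐ x ∂ν, |x| ≤ R := gini_aux_ae_bound hνsupp (le_max_right _ _)
  -- measurability of max on the product
  have hmaxc : Continuous fun p : ℝ × ℝ => max p.1 p.2 := continuous_fst.max continuous_snd
  -- integrability of max on products
  have hmaxint : ∀ (m m' : Measure ℝ), IsProbabilityMeasure m → IsProbabilityMeasure m' →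
      (∀ᵐ x ∂m, |x| ≤ R) → (∀ᵐ x ∂m', |x| ≤ R) →
      Integrable (fun p : ℝ × ℝ => max p.1 p.2) (m.prod m') := by
    intro m m' _ _ hm hm'
    refine gini_aux_integrable hmaxc.aestronglyMeasurable (C := R) ?_
    filter_upwards [gini_aux_prod_ae hm hm'] with p hp
    rw [abs_le]
    exact ⟨le_max_of_le_left (abs_le.mp hp.1).1, max_le (abs_le.mp hp.1).2 (abs_le.mp hp.2).2⟩
  -- key pointwise convex-order inequality
  have key : ∀ t : ℝ, (∫ x, max x t ∂μ) ≤ ∫ x, max x t ∂ν := by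
    intro t
    refine hcx _ (continuous_id.max continuous_const) ?_
    have := (convexOn_id (convex_univ (𝕜 := ℝ) (E := ℝ))).sup
      (convexOn_const t (convex_univ (𝕜 := ℝ) (E := ℝ)))
    simpa [Pi.sup_def] using this
  have key2 : ∀ t : ℝ, (∫ y, max t y ∂μ) ≤ ∫ y, max t y ∂ν := by
    intro t
    simpa only [max_comm] using key t
  -- integrability of the inner integral functions
  have hinner_meas : ∀ (m : Measure ℝ), SFinite m →
      StronglyMeasurable fun x => ∫ y, max x y ∂m := by
    intro m _
    exact hmaxc.stronglyMeasurable.integral_prod_right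
  have hinner_int : ∀ (m m' : Measure ℝ), IsProbabilityMeasure m → IsProbabilityMeasure m' →
      (∀ᵐ x ∂m, |x| ≤ R) → (∀ᵐ x ∂m', |x| ≤ R) →
      Integrable (fun x => ∫ y, max x y ∂m') m := by
    intro m m' _ _ hm hm'
    refine gini_aux_integrable (hinner_meas m' inferInstance).aestronglyMeasurable (C := R) ?_
    filter_upwards [hm] with x hx
    rw [← Real.norm_eq_abs]
    refine le_trans (norm_integral_le_of_norm_le (integrable_const R) ?_) (by simp)
    filter_upwards [hm'] with y hy
    rw [Real.norm_eq_abs, abs_le]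
    exact ⟨le_max_of_le_left (abs_le.mp hx).1, max_le (abs_le.mp hx).2 (abs_le.mp hy).2⟩
  -- monotonicity of the double integral of max
  have hmaxmono : (∫ p : ℝ × ℝ, max p.1 p.2 ∂(μ.prod μ))
      ≤ ∫ p : ℝ × ℝ, max p.1 p.2 ∂(ν.prod ν) := by
    rw [integral_prod _ (hmaxint μ μ inferInstance inferInstance hμae hμae),
      integral_prod _ (hmaxint ν ν inferInstance inferInstance hνae hνae)]
    calc ∫ x, ∫ y, max x y ∂μ ∂μ
        ≤ ∫ x, ∫ y, max x y ∂ν ∂μ := by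
          refine integral_mono (hinner_int μ μ inferInstance inferInstance hμae hμae)
            (hinner_int μ ν inferInstance inferInstance hμae hνae) ?_
          intro x; exact key2 x
      _ = ∫ y, ∫ x, max x y ∂μ ∂ν :=
          integral_integral_swap (hmaxint μ ν inferInstance inferInstance hμae hνae)
      _ ≤ ∫ y, ∫ x, max x y ∂ν ∂ν := by
          refine integral_mono ?_ ?_ (fun y => key y)
          · refine gini_aux_integrable ?_ (C := R) ?_
            · exact (hmaxc.stronglyMeasurable.integral_prod_left (μ := μ)).aestronglyMeasurable
            · filter_upwards [hνae] with y hy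
              rw [← Real.norm_eq_abs]
              refine le_trans (norm_integral_le_of_norm_le (integrable_const R) ?_) (by simp)
              filter_upwards [hμae] with x hx
              rw [Real.norm_eq_abs, abs_le]
              exact ⟨le_max_of_le_left (abs_le.mp hx).1, max_le (abs_le.mp hx).2 (abs_le.mp hy).2⟩
          · refine gini_aux_integrable ?_ (C := R) ?_
            · exact (hmaxc.stronglyMeasurable.integral_prod_left (μ := ν)).aestronglyMeasurable
            · filter_upwards [hνae] with y hy
              rw [← Real.norm_eq_abs]
              refine le_trans (norm_integral_le_of_norm_le (integrable_const R) ?_) (by simp)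
              filter_upwards [hνae] with x hx
              rw [Real.norm_eq_abs, abs_le]
              exact ⟨le_max_of_le_left (abs_le.mp hx).1, max_le (abs_le.mp hx).2 (abs_le.mp hy).2⟩
      _ = ∫ x, ∫ y, max x y ∂ν ∂ν :=
          (integral_integral_swap (hmaxint ν ν inferInstance inferInstance hνae hνae)).symm
  -- equality of means
  have hmean : (∫ x, x ∂μ) = ∫ x, x ∂ν := by
    have h1 : (∫ x, x ∂μ) ≤ ∫ x, x ∂ν := by
      simpa using hcx id continuous_id (convexOn_id convex_univ)
    have h2 : (∫ x, (-x) ∂μ) ≤ ∫ x, (-x) ∂ν := by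
      refine hcx _ continuous_neg ?_
      exact (concaveOn_id convex_univ).neg
    rw [integral_neg, integral_neg, neg_le_neg_iff] at h2
    linarith
  -- pointwise identity |a - b| = 2 * max a b - (a + b)
  have habs : ∀ p : ℝ × ℝ, |p.1 - p.2| = 2 * max p.1 p.2 - (p.1 + p.2) := by
    intro p
    rcases le_total p.1 p.2 with h | h
    · rw [max_eq_right h, abs_of_nonpos (by linarith)]; ring
    · rw [max_eq_left h, abs_of_nonneg (by linarith)]; ring
  -- compute both Gini integrals
  have hcomp : ∀ (m : Measure ℝ), IsProbabilityMeasure m → (∀ᵐ x ∂m, |x| ≤ R) →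
      (∫ p : ℝ × ℝ, |p.1 - p.2| ∂(m.prod m))
        = 2 * (∫ p : ℝ × ℝ, max p.1 p.2 ∂(m.prod m)) - 2 * ∫ x, x ∂m := by
    intro m _ hm
    have hpm := gini_aux_prod_ae hm hm
    have hint1 : Integrable (fun p : ℝ × ℝ => p.1) (m.prod m) := by
      refine gini_aux_integrable continuous_fst.aestronglyMeasurable (C := R) ?_
      filter_upwards [hpm] with p hp using hp.1
    have hint2 : Integrable (fun p : ℝ × ℝ => p.2) (m.prod m) := by
      refine gini_aux_integrable continuous_snd.aestronglyMeasurable (C := R) ?_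
      filter_upwards [hpm] with p hp using hp.2
    have hintmax := hmaxint m m inferInstance inferInstance hm hm
    have hfst : (∫ p : ℝ × ℝ, p.1 ∂(m.prod m)) = ∫ x, x ∂m := by
      rw [integral_prod _ hint1]
      simp [integral_const]
    have hsnd : (∫ p : ℝ × ℝ, p.2 ∂(m.prod m)) = ∫ x, x ∂m := by
      rw [integral_prod _ hint2]
      simp [integral_const]
    calc (∫ p : ℝ × ℝ, |p.1 - p.2| ∂(m.prod m))
        = ∫ p : ℝ × ℝ, (2 * max p.1 p.2 - (p.1 + p.2)) ∂(m.prod m) := by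
          exact integral_congr_ae (Filter.Eventually.of_forall habs)
      _ = 2 * (∫ p : ℝ × ℝ, max p.1 p.2 ∂(m.prod m)) - 2 * ∫ x, x ∂m := by
          have hint12 : Integrable (fun p : ℝ × ℝ => p.1 + p.2) (m.prod m) := hint1.add hint2
          rw [integral_sub (hintmax.const_mul 2) hint12,
            integral_const_mul, integral_add hint1 hint2, hfst, hsnd]
          ring
  rw [hcomp μ inferInstance hμae, hcomp ν inferInstance hνae, hmean]
  have := hmaxmono
  linarith
end

section
/- Let (Ω, P) be a probability space, γ ∈ (0, 1), and let (R_t)_{t≥0} be a sequence of measurable functions R_t : Ω → ℝ with |R_t(ω)| ≤ C for all t and ω, for some constant C. Let G = Σ_{t=0}^{∞} γ^t R_t (which converges absolutely and is bounded), and let μ = (1 − γ) Σ_{t=0}^{∞} γ^t (R_t)_* P be the discounted mixture probability measure on ℝ. Then the variance of the total return is bounded by the variance of μ scaled by (1 − γ)^{-2}: ∫_Ω (G − ∫ G dP)² dP ≤ (∫_ℝ x² dμ − (∫_ℝ x dμ)²) / (1 − γ)². -/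
open MeasureTheory Filter
open scoped ENNReal NNReal

private lemma tsum_cs {w b : ℕ → ℝ} (hw : ∀ t, 0 ≤ w t)
    (hws : Summable w) (hw1 : ∑' t, w t ≤ 1)
    (hwb : Summable fun t => w t * b t) (hwb2 : Summable fun t => w t * b t ^ 2) :
    (∑' t, w t * b t) ^ 2 ≤ ∑' t, w t * b t ^ 2 := by
  have hterm2 : ∀ t, 0 ≤ w t * b t ^ 2 := fun t => mul_nonneg (hw t) (sq_nonneg _)
  have key : ∀ n : ℕ, (∑ t ∈ Finset.range n, w t * b t) ^ 2 ≤ ∑' t, w t * b t ^ 2 := by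
    intro n
    have h1 := Finset.sum_mul_sq_le_sq_mul_sq (Finset.range n)
      (fun t => Real.sqrt (w t)) (fun t => Real.sqrt (w t) * b t)
    have e1 : ∀ t, Real.sqrt (w t) * (Real.sqrt (w t) * b t) = w t * b t := by
      intro t; rw [← mul_assoc, Real.mul_self_sqrt (hw t)]
    have e2 : ∀ t, (Real.sqrt (w t)) ^ 2 = w t := fun t => Real.sq_sqrt (hw t)
    have e3 : ∀ t, (Real.sqrt (w t) * b t) ^ 2 = w t * b t ^ 2 := by
      intro t; rw [mul_pow, e2]
    simp only [e1, e2, e3] at h1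
    refine h1.trans ?_
    have hA : ∑ t ∈ Finset.range n, w t ≤ 1 :=
      (Summable.sum_le_tsum _ (fun t _ => hw t) hws).trans hw1
    have hB : ∑ t ∈ Finset.range n, w t * b t ^ 2 ≤ ∑' t, w t * b t ^ 2 :=
      Summable.sum_le_tsum _ (fun t _ => hterm2 t) hwb2
    calc (∑ t ∈ Finset.range n, w t) * ∑ t ∈ Finset.range n, w t * b t ^ 2
        ≤ 1 * ∑' t, w t * b t ^ 2 :=
          mul_le_mul hA hB (Finset.sum_nonneg fun t _ => hterm2 t) zero_le_one
      _ = ∑' t, w t * b t ^ 2 := one_mul _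
  exact le_of_tendsto (hwb.hasSum.tendsto_sum_nat.pow 2) (Eventually.of_forall key)

/-- Lemma 1 of Bisi et al. (2020): the variance of the discounted total return
`G = Σ_t γ^t R_t` is bounded by the variance of the normalized discounted
reward distribution `μ = (1 - γ) Σ_t γ^t (R_t)_* P`, scaled by `(1 - γ)⁻²`:
`𝕍[G₀] ≤ 𝕍[R] / (1 - γ)²`. -/
theorem return_variance_le_reward_variance
    {Ω : Type*} [MeasurableSpace Ω] (P : Measure Ω) [IsProbabilityMeasure P]
    (γ : ℝ) (hγ : γ ∈ Set.Ioo (0 : ℝ) 1)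
    (R : ℕ → Ω → ℝ) (hRm : ∀ t, Measurable (R t))
    (C : ℝ) (hRb : ∀ t ω, |R t ω| ≤ C)
    (G : Ω → ℝ) (hG : ∀ ω, G ω = ∑' t : ℕ, γ ^ t * R t ω)
    (μ : Measure ℝ)
    (hμ : μ = Measure.sum fun t : ℕ =>
      (ENNReal.ofReal ((1 - γ) * γ ^ t)) • P.map (R t)) :
    (∫ ω, (G ω - ∫ ω', G ω' ∂P) ^ 2 ∂P)
      ≤ ((∫ x, x ^ 2 ∂μ) - (∫ x, x ∂μ) ^ 2) / (1 - γ) ^ 2 := by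
  obtain ⟨hγ0, hγ1⟩ := hγ
  have hγ0' : (0:ℝ) ≤ γ := hγ0.le
  have h1γ : (0:ℝ) < 1 - γ := by linarith
  have hGeq : G = fun ω => ∑' t : ℕ, γ ^ t * R t ω := funext hG
  subst hGeq
  subst hμ
  set C' : ℝ := max C 0 with hC'def
  have hC' : 0 ≤ C' := le_max_right _ _
  have hRb' : ∀ t ω, |R t ω| ≤ C' := fun t ω => (hRb t ω).trans (le_max_left _ _)
  set w : ℕ → ℝ := fun t => (1 - γ) * γ ^ t with hwdef
  have hw0 : ∀ t, 0 ≤ w t := fun t => mul_nonneg h1γ.le (pow_nonneg hγ0' t)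
  have hgs : Summable (fun t : ℕ => γ ^ t) := summable_geometric_of_lt_one hγ0' hγ1
  have hws : Summable w := hgs.mul_left _
  have hwsum : ∑' t, w t = 1 := by
    rw [hwdef, tsum_mul_left, tsum_geometric_of_lt_one hγ0' hγ1]
    field_simp
  have hsumR : ∀ ω, Summable fun t => γ ^ t * R t ω := by
    intro ω
    apply Summable.of_norm
    apply Summable.of_nonneg_of_le (fun t => norm_nonneg _) (fun t => ?_) (hgs.mul_right C')
    rw [norm_mul, norm_pow, Real.norm_eq_abs, Real.norm_eq_abs, abs_of_nonneg hγ0']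
    exact mul_le_mul_of_nonneg_left (hRb' t ω) (pow_nonneg hγ0' t)
  set G : Ω → ℝ := fun ω => ∑' t : ℕ, γ ^ t * R t ω with hGdef
  set μ : Measure ℝ := Measure.sum fun t : ℕ =>
      (ENNReal.ofReal ((1 - γ) * γ ^ t)) • P.map (R t) with hμdef
  -- G measurable and bounded
  have hGm : Measurable G := by
    apply measurable_of_tendsto_metrizable
      (f := fun n ω => ∑ t ∈ Finset.range n, γ ^ t * R t ω)
      (fun n => Finset.measurable_sum _ (fun t _ => measurable_const.mul (hRm t)))
    rw [tendsto_pi_nhds]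
    intro ω
    exact (hsumR ω).hasSum.tendsto_sum_nat
  have hGb : ∀ ω, |G ω| ≤ C' / (1 - γ) := by
    intro ω
    have hn : Summable fun t => ‖γ ^ t * R t ω‖ := (hsumR ω).abs
    calc |G ω| ≤ ∑' t, ‖γ ^ t * R t ω‖ := by
          simpa [Real.norm_eq_abs] using norm_tsum_le_tsum_norm hn
      _ ≤ ∑' t, γ ^ t * C' := by
          apply Summable.tsum_le_tsum _ hn (hgs.mul_right C')
          intro t
          rw [norm_mul, norm_pow, Real.norm_eq_abs, Real.norm_eq_abs, abs_of_nonneg hγ0']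
          exact mul_le_mul_of_nonneg_left (hRb' t ω) (pow_nonneg hγ0' t)
      _ = C' / (1 - γ) := by
          rw [tsum_mul_right, tsum_geometric_of_lt_one hγ0' hγ1]
          rw [inv_mul_eq_div]
  -- integrability helpers
  have intP : ∀ (f : Ω → ℝ) (D : ℝ), Measurable f → (∀ ω, |f ω| ≤ D) → Integrable f P := by
    intro f D hf hb
    exact memLp_one_iff_integrable.1 <| MemLp.of_bound hf.aestronglyMeasurable D
      (Eventually.of_forall (by simpa [Real.norm_eq_abs] using hb))
  -- μ is a probability measure
  have hμP : IsProbabilityMeasure μ := by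
    constructor
    rw [hμdef, Measure.sum_apply _ MeasurableSet.univ]
    have hm1 : ∀ t : ℕ, (P.map (R t)) Set.univ = 1 := fun t => by
      rw [Measure.map_apply (hRm t) MeasurableSet.univ, Set.preimage_univ, measure_univ]
    simp only [Measure.smul_apply, smul_eq_mul, hm1, mul_one]
    rw [← ENNReal.ofReal_tsum_of_nonneg hw0 hws, hwsum, ENNReal.ofReal_one]
  haveI := hμP
  -- a.e. bound on μ
  have hμae : ∀ᵐ x ∂μ, |x| ≤ C' := by
    rw [ae_iff]
    have hs : MeasurableSet {x : ℝ | ¬ |x| ≤ C'} := by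
      have : {x : ℝ | ¬ |x| ≤ C'} = {x : ℝ | C' < |x|} := by ext x; simp [not_le]
      rw [this]
      exact measurableSet_lt measurable_const measurable_id.abs
    rw [hμdef, Measure.sum_apply _ hs]
    have hz : ∀ t : ℕ, (ENNReal.ofReal (w t) • P.map (R t)) {x : ℝ | ¬ |x| ≤ C'} = 0 := by
      intro t
      rw [Measure.smul_apply, Measure.map_apply (hRm t) hs]
      have he : R t ⁻¹' {x : ℝ | ¬ |x| ≤ C'} = ∅ := by
        ext ω; simp [hRb' t ω]
      rw [he, measure_empty, smul_zero]
    simp only [hwdef] at hz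
    simp only [hz, tsum_zero]
  have intμ : ∀ (f : ℝ → ℝ) (D : ℝ), Measurable f → (∀ x, |x| ≤ C' → |f x| ≤ D) →
      Integrable f μ := by
    intro f D hf hb
    exact memLp_one_iff_integrable.1 <| MemLp.of_bound hf.aestronglyMeasurable D
      (hμae.mono fun x hx => by simpa [Real.norm_eq_abs] using hb x hx)
  have hxi : Integrable (fun x : ℝ => x) μ := intμ _ C' measurable_id (fun x h => h)
  have hx2i : Integrable (fun x : ℝ => x ^ 2) μ := by
    refine intμ _ (C' ^ 2) (measurable_id.pow_const 2) (fun x h => ?_)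
    rw [abs_pow]
    exact pow_le_pow_left₀ (abs_nonneg x) h 2
  set a : ℝ := ∫ x, x ∂μ with hadef
  have habs : ∀ x : ℝ, |x| ≤ C' → |x - a| ≤ C' + |a| := by
    intro x h
    calc |x - a| ≤ |x| + |a| := abs_sub _ _
      _ ≤ C' + |a| := add_le_add_left h _
  have hxai : Integrable (fun x : ℝ => (x - a) ^ 2) μ := by
    refine intμ _ ((C' + |a|) ^ 2) ((measurable_id.sub_const a).pow_const 2) (fun x h => ?_)
    rw [abs_pow]
    exact pow_le_pow_left₀ (abs_nonneg _) (habs x h) 2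
  -- representation of integrals over μ
  have μrepr : ∀ (f : ℝ → ℝ), Measurable f → Integrable f μ →
      ∫ x, f x ∂μ = ∑' t, w t * ∫ ω, f (R t ω) ∂P := by
    intro f hfm hfi
    rw [hμdef] at hfi ⊢
    rw [integral_sum_measure hfi]
    congr 1
    funext t
    rw [integral_smul_measure, integral_map (hRm t).aemeasurable hfm.aestronglyMeasurable,
      ENNReal.toReal_ofReal (hw0 t)]
    rfl
  -- expansion of the second moment about a
  have expand : ∫ x, (x - a) ^ 2 ∂μ = (∫ x, x ^ 2 ∂μ) - a ^ 2 := by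
    have he : ∀ x : ℝ, (x - a) ^ 2 = x ^ 2 - (2 * a) * x + a ^ 2 := fun x => by ring
    simp_rw [he]
    have h2 : Integrable (fun x : ℝ => 2 * a * x) μ := hxi.const_mul (2 * a)
    have h1 : Integrable (fun x : ℝ => x ^ 2 - 2 * a * x) μ := hx2i.sub h2
    rw [integral_add h1 (integrable_const _), integral_sub hx2i h2, integral_const_mul,
      integral_const, probReal_univ, smul_eq_mul, one_mul, ← hadef]
    ring
  set c : ℝ := a / (1 - γ) with hcdef
  set D : ℝ := C' + |a| with hDdef
  have hD : 0 ≤ D := add_nonneg hC' (abs_nonneg a)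
  have hbb : ∀ ω t, (R t ω - a) ^ 2 ≤ D ^ 2 := by
    intro ω t
    rw [← sq_abs (R t ω - a)]
    exact pow_le_pow_left₀ (abs_nonneg _) (habs _ (hRb' t ω)) 2
  have hb2 : ∀ ω, Summable fun t => w t * (R t ω - a) ^ 2 := by
    intro ω
    refine Summable.of_nonneg_of_le (fun t => mul_nonneg (hw0 t) (sq_nonneg _))
      (fun t => mul_le_mul_of_nonneg_left (hbb ω t) (hw0 t)) (hws.mul_right (D ^ 2))
  have hbe : ∀ ω, (fun t => w t * (R t ω - a)) =
      fun t => (1 - γ) * (γ ^ t * R t ω) - a * w t := by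
    intro ω; funext t; simp only [hwdef]; ring
  have hb1 : ∀ ω, Summable fun t => w t * (R t ω - a) := by
    intro ω
    rw [hbe ω]
    exact ((hsumR ω).mul_left (1 - γ)).sub (hws.mul_left a)
  have hS : ∀ ω, ∑' t, w t * (R t ω - a) = (1 - γ) * G ω - a := by
    intro ω
    rw [hbe ω, Summable.tsum_sub ((hsumR ω).mul_left (1 - γ)) (hws.mul_left a),
      tsum_mul_left, tsum_mul_left, hwsum, mul_one]
  have hpt : ∀ ω, (G ω - c) ^ 2 ≤ (∑' t, w t * (R t ω - a) ^ 2) / (1 - γ) ^ 2 := by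
    intro ω
    have hcs := tsum_cs hw0 hws hwsum.le (hb1 ω) (hb2 ω)
    rw [hS ω] at hcs
    have he : (1 - γ) * G ω - a = (1 - γ) * (G ω - c) := by
      rw [hcdef]; field_simp
    rw [he, mul_pow] at hcs
    rw [le_div_iff₀ (by positivity)]
    calc (G ω - c) ^ 2 * (1 - γ) ^ 2 = (1 - γ) ^ 2 * (G ω - c) ^ 2 := mul_comm _ _
      _ ≤ _ := hcs
  set g : Ω → ℝ := fun ω => ∑' t, w t * (R t ω - a) ^ 2 with hgdef
  have hgmm : ∀ t : ℕ, Measurable fun ω => w t * (R t ω - a) ^ 2 :=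
    fun t => measurable_const.mul (((hRm t).sub_const a).pow_const 2)
  have hgm : Measurable g := by
    apply measurable_of_tendsto_metrizable
      (f := fun n ω => ∑ t ∈ Finset.range n, w t * (R t ω - a) ^ 2)
      (fun n => Finset.measurable_sum _ (fun t _ => hgmm t))
    rw [tendsto_pi_nhds]
    intro ω
    exact (hb2 ω).hasSum.tendsto_sum_nat
  have hgnn : ∀ ω, 0 ≤ g ω := fun ω => tsum_nonneg fun t => mul_nonneg (hw0 t) (sq_nonneg _)
  have hgb : ∀ ω, |g ω| ≤ D ^ 2 := by
    intro ω
    rw [abs_of_nonneg (hgnn ω), hgdef]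
    calc (∑' t, w t * (R t ω - a) ^ 2) ≤ ∑' t, w t * D ^ 2 :=
        Summable.tsum_le_tsum (fun t => mul_le_mul_of_nonneg_left (hbb ω t) (hw0 t)) (hb2 ω)
          (hws.mul_right _)
      _ = D ^ 2 := by rw [tsum_mul_right, hwsum, one_mul]
  have hgi : Integrable g P := intP g (D ^ 2) hgm hgb
  have hIg : ∫ ω, g ω ∂P = ∑' t, w t * ∫ ω, (R t ω - a) ^ 2 ∂P := by
    have hbd : ∀ t : ℕ, ∫⁻ ω, ‖w t * (R t ω - a) ^ 2‖₊ ∂P ≤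
          ENNReal.ofReal (w t) * ENNReal.ofReal (D ^ 2) := by
        intro t
        calc ∫⁻ ω, (‖w t * (R t ω - a) ^ 2‖₊ : ℝ≥0∞) ∂P
            ≤ ∫⁻ _ω, ENNReal.ofReal (w t * D ^ 2) ∂P := by
              refine lintegral_mono fun ω => ?_
              rw [← enorm_eq_nnnorm, ← ofReal_norm]
              apply ENNReal.ofReal_le_ofReal
              rw [Real.norm_eq_abs, abs_mul, abs_of_nonneg (hw0 t),
                abs_of_nonneg (sq_nonneg (R t ω - a))]
              exact mul_le_mul_of_nonneg_left (hbb ω t) (hw0 t)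
          _ = ENNReal.ofReal (w t) * ENNReal.ofReal (D ^ 2) := by
              rw [lintegral_const, measure_univ, mul_one, ENNReal.ofReal_mul (hw0 t)]
    have hfin : ∑' t, ∫⁻ ω, ‖w t * (R t ω - a) ^ 2‖₊ ∂P ≠ ⊤ := by
      refine ne_top_of_le_ne_top ?_ (ENNReal.tsum_le_tsum hbd)
      rw [ENNReal.tsum_mul_right, ← ENNReal.ofReal_tsum_of_nonneg hw0 hws, hwsum]
      exact ENNReal.mul_ne_top (by simp) ENNReal.ofReal_ne_top
    simp only [hgdef]
    rw [integral_tsum (fun t => (hgmm t).aestronglyMeasurable) hfin]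
    exact tsum_congr fun t => integral_const_mul _ _
  set m : ℝ := ∫ ω, G ω ∂P with hmdef
  have hGi : Integrable G P := intP G (C' / (1 - γ)) hGm hGb
  have hsub : ∀ r : ℝ, Integrable (fun ω => (G ω - r) ^ 2) P := by
    intro r
    refine intP _ ((C' / (1 - γ) + |r|) ^ 2) ((hGm.sub_const r).pow_const 2) fun ω => ?_
    rw [abs_pow]
    refine pow_le_pow_left₀ (abs_nonneg _) ?_ 2
    calc |G ω - r| ≤ |G ω| + |r| := abs_sub _ _
      _ ≤ C' / (1 - γ) + |r| := add_le_add_left (hGb ω) _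
  have hshift : ∫ ω, (G ω - m) ^ 2 ∂P ≤ ∫ ω, (G ω - c) ^ 2 ∂P := by
    have hexp : ∀ ω, (G ω - c) ^ 2 =
        (G ω - m) ^ 2 + ((2 * (m - c)) * (G ω - m) + (m - c) ^ 2) := fun ω => by ring
    have hGmi : Integrable (fun ω => G ω - m) P := hGi.sub (integrable_const m)
    have h2 : Integrable (fun ω => (2 * (m - c)) * (G ω - m)) P := hGmi.const_mul _
    have hImean : ∫ ω, G ω - m ∂P = 0 := by
      rw [integral_sub hGi (integrable_const m), integral_const, probReal_univ,
        one_smul, ← hmdef, sub_self]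
    calc ∫ ω, (G ω - m) ^ 2 ∂P ≤ ∫ ω, (G ω - m) ^ 2 ∂P + (m - c) ^ 2 :=
        le_add_of_nonneg_right (sq_nonneg _)
      _ = ∫ ω, (G ω - c) ^ 2 ∂P := by
          have h3 : Integrable (fun ω => 2 * (m - c) * (G ω - m) + (m - c) ^ 2) P :=
            h2.add (integrable_const _)
          simp_rw [hexp]
          rw [integral_add (hsub m) h3, integral_add h2 (integrable_const _),
            integral_const_mul, hImean, mul_zero, zero_add, integral_const, probReal_univ,
            one_smul]
  calc ∫ ω, (G ω - m) ^ 2 ∂P ≤ ∫ ω, (G ω - c) ^ 2 ∂P := hshift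
    _ ≤ ∫ ω, g ω / (1 - γ) ^ 2 ∂P := integral_mono (hsub c) (hgi.div_const _) hpt
    _ = (∫ ω, g ω ∂P) / (1 - γ) ^ 2 := integral_div _ _
    _ = (∑' t, w t * ∫ ω, (R t ω - a) ^ 2 ∂P) / (1 - γ) ^ 2 := by rw [hIg]
    _ = (∫ x, (x - a) ^ 2 ∂μ) / (1 - γ) ^ 2 := by
        rw [μrepr (fun x => (x - a) ^ 2) ((measurable_id.sub_const a).pow_const 2) hxai]
    _ = ((∫ x, x ^ 2 ∂μ) - a ^ 2) / (1 - γ) ^ 2 := by rw [expand]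
end
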